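/- arXiv:2005.12107 — 4 statements merged into one kernel-verified Lean document; each statement's English description precedes it below -/
import Mathlib

section
/- Let θ ∈ ℝ, let G be a finite simple graph, and let u be a vertex of G that is not θ-essential but has a θ-essential neighbor (i.e., u is θ-special). Then u is θ-positive: mult(θ, G−u) = mult(θ, G) + 1. -/
open Polynomial

/-- The matching polynomial of a finite simple graph `G`:
`μ(G,z) = ∑_k (-1)^k p(k,G) z^(n-2k)`, written as a sum over all matchings
(finsets of pairwise disjoint edges). -/
noncomputable def matchingPolynomial {V : Type*} [Finite V] (G : SimpleGraph V) :
    Polynomial ℝ := by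
  classical
  have : Fintype V := Fintype.ofFinite V
  exact ∑ M ∈ Finset.univ.filter
      (fun M : Finset (Sym2 V) =>
        (∀ e ∈ M, e ∈ G.edgeSet) ∧ ∀ e ∈ M, ∀ f ∈ M, e ≠ f → ∀ v, v ∈ e → v ∉ f),
    (-1 : Polynomial ℝ) ^ M.card * X ^ (Nat.card V - 2 * M.card)

/-- `matchMult θ G` is the multiplicity of `θ` as a root of the matching polynomial
of `G` (equal to `0` if `θ` is not a root). -/
noncomputable def matchMult {V : Type*} [Finite V] (θ : ℝ) (G : SimpleGraph V) : ℕ :=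
  Polynomial.rootMultiplicity θ (matchingPolynomial G)

/-- A vertex `u` is `θ`-essential if `mult(θ, G-u) = mult(θ, G) - 1`. -/
def IsEssential {V : Type*} [Finite V] (θ : ℝ) (G : SimpleGraph V) (u : V) : Prop :=
  matchMult θ (G.induce {v | v ≠ u}) + 1 = matchMult θ G

/-- A vertex `u` is `θ`-positive if `mult(θ, G-u) = mult(θ, G) + 1`. -/
def IsPositive {V : Type*} [Finite V] (θ : ℝ) (G : SimpleGraph V) (u : V) : Prop :=
  matchMult θ (G.induce {v | v ≠ u}) = matchMult θ G + 1

/-- A vertex `u` is `θ`-neutral if `mult(θ, G-u) = mult(θ, G)`. -/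
def IsNeutral {V : Type*} [Finite V] (θ : ℝ) (G : SimpleGraph V) (u : V) : Prop :=
  matchMult θ (G.induce {v | v ≠ u}) = matchMult θ G

/-- A vertex is `θ`-special if it is not `θ`-essential but has a `θ`-essential neighbor. -/
def IsSpecial {V : Type*} [Finite V] (θ : ℝ) (G : SimpleGraph V) (u : V) : Prop :=
  ¬ IsEssential θ G u ∧ ∃ w, G.Adj u w ∧ IsEssential θ G w

/-- The outer vertex boundary `∂S`: vertices not in `S` with a neighbor in `S`. -/
def vertexBoundary {V : Type*} (G : SimpleGraph V) (S : Set V) : Set V :=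
  {v | v ∉ S ∧ ∃ w ∈ S, G.Adj v w}

set_option linter.unusedSectionVars false
namespace MatchAux

variable {V : Type*} [Fintype V] [DecidableEq V]

def IsMatch (G : SimpleGraph V) (s : Finset V) (M : Finset (Sym2 V)) : Prop :=
  (∀ e ∈ M, e ∈ G.edgeSet) ∧ (∀ e ∈ M, ∀ v ∈ e, v ∈ s) ∧
    (∀ e ∈ M, ∀ f ∈ M, e ≠ f → ∀ v, v ∈ e → v ∉ f)

noncomputable def matchSet (G : SimpleGraph V) (s : Finset V) : Finset (Finset (Sym2 V)) := by
  classical exact Finset.univ.filter (fun M => IsMatch G s M)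

lemma mem_matchSet {G : SimpleGraph V} {s : Finset V} {M : Finset (Sym2 V)} :
    M ∈ matchSet G s ↔ IsMatch G s M := by
  classical
  unfold matchSet
  rw [Finset.mem_filter]
  simp

noncomputable def mp (G : SimpleGraph V) (s : Finset V) : ℝ[X] :=
  ∑ M ∈ matchSet G s, (-1 : ℝ[X]) ^ M.card * X ^ (s.card - 2 * M.card)

def supp (M : Finset (Sym2 V)) : Finset V := M.biUnion (fun e => Finset.univ.filter (· ∈ e))

lemma mem_supp {M : Finset (Sym2 V)} {v : V} : v ∈ supp M ↔ ∃ e ∈ M, v ∈ e := by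
  simp [supp]

lemma card_filter_mem_eq_two {e : Sym2 V} (he : ¬ e.IsDiag) :
    (Finset.univ.filter (· ∈ e)).card = 2 := by
  induction e with
  | _ a b =>
    have hab : a ≠ b := by simpa using he
    have : (Finset.univ.filter (· ∈ s(a, b))) = {a, b} := by
      ext x; simp [Sym2.mem_iff]
    rw [this, Finset.card_insert_of_notMem (by simpa using hab), Finset.card_singleton]

lemma card_supp {G : SimpleGraph V} {s : Finset V} {M : Finset (Sym2 V)}
    (h : IsMatch G s M) : (supp M).card = 2 * M.card := by
  rw [supp, Finset.card_biUnion]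
  · rw [Finset.sum_congr rfl (fun e he => card_filter_mem_eq_two
      (G.not_isDiag_of_mem_edgeSet (h.1 e he)))]
    simp [Finset.sum_const, mul_comm]
  · intro e he f hf hef
    simp only [Finset.disjoint_left, Finset.mem_filter]
    rintro v ⟨-, hv⟩ ⟨-, hv'⟩
    exact h.2.2 e he f hf hef v hv hv'

lemma supp_subset {G : SimpleGraph V} {s : Finset V} {M : Finset (Sym2 V)}
    (h : IsMatch G s M) : supp M ⊆ s := by
  intro v hv
  rcases mem_supp.1 hv with ⟨e, he, hve⟩
  exact h.2.1 e he v hve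

lemma two_mul_card_le {G : SimpleGraph V} {s : Finset V} {M : Finset (Sym2 V)}
    (h : IsMatch G s M) : 2 * M.card ≤ s.card := by
  rw [← card_supp h]
  exact Finset.card_le_card (supp_subset h)

lemma matchSet_empty (G : SimpleGraph V) : matchSet G (∅ : Finset V) = {∅} := by
  ext M
  simp only [mem_matchSet, Finset.mem_singleton]
  constructor
  · intro h
    by_contra hM
    rcases Finset.nonempty_iff_ne_empty.2 hM with ⟨e, he⟩
    obtain ⟨v, hv⟩ : ∃ v, v ∈ e := ⟨e.out.1, e.out_fst_mem⟩
    simpa using h.2.1 e he v hv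
  · rintro rfl
    exact ⟨by simp, by simp, by simp⟩

lemma mp_empty (G : SimpleGraph V) : mp G ∅ = 1 := by
  rw [mp, matchSet_empty]
  simp

lemma empty_mem_matchSet (G : SimpleGraph V) (s : Finset V) : ∅ ∈ matchSet G s := by
  rw [mem_matchSet]
  exact ⟨by simp, by simp, by simp⟩

lemma mp_coeff_card (G : SimpleGraph V) (s : Finset V) : (mp G s).coeff s.card = 1 := by
  rw [mp, finset_sum_coeff]
  rw [Finset.sum_eq_single (∅ : Finset (Sym2 V))]
  · simp
  · intro M hM hMne
    have h2 : 2 * M.card ≤ s.card := two_mul_card_le (mem_matchSet.1 hM)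
    have hMc : M.card ≠ 0 := by simpa using hMne
    have hlt : s.card - 2 * M.card < s.card := by omega
    have : ((-1 : ℝ[X]) ^ M.card * X ^ (s.card - 2 * M.card)).coeff s.card
        = ((-1:ℝ)^M.card) * ((X:ℝ[X]) ^ (s.card - 2*M.card)).coeff s.card := by
      rw [← C_1, ← C_neg, ← C_pow, coeff_C_mul]
    rw [this, coeff_X_pow, if_neg (by omega)]
    ring
  · intro h
    exact absurd (empty_mem_matchSet G s) h

lemma mp_ne_zero (G : SimpleGraph V) (s : Finset V) : mp G s ≠ 0 := by
  intro h
  have := mp_coeff_card G s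
  rw [h] at this
  simp at this

noncomputable def nbrs (G : SimpleGraph V) (s : Finset V) (u : V) : Finset V := by
  classical exact s.filter (G.Adj u)

lemma mem_nbrs {G : SimpleGraph V} {s : Finset V} {u v : V} :
    v ∈ nbrs G s u ↔ v ∈ s ∧ G.Adj u v := by
  classical
  unfold nbrs
  rw [Finset.mem_filter]

lemma matchSet_erase_eq_filter (G : SimpleGraph V) (s : Finset V) (u : V) :
    matchSet G (s.erase u) = (matchSet G s).filter (fun M => ∀ e ∈ M, u ∉ e) := by
  classical
  ext M
  simp only [Finset.mem_filter, mem_matchSet, IsMatch, Finset.mem_erase]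
  constructor
  · rintro ⟨h1, h2, h3⟩
    exact ⟨⟨h1, fun e he v hv => (h2 e he v hv).2, h3⟩, fun e he hue => (h2 e he u hue).1 rfl⟩
  · rintro ⟨⟨h1, h2, h3⟩, h4⟩
    exact ⟨h1, fun e he v hv => ⟨fun hvu => h4 e he (hvu ▸ hv), h2 e he v hv⟩, h3⟩

lemma sum_filter_covered (G : SimpleGraph V) (s : Finset V) (u : V) (hu : u ∈ s)
    (F : Finset (Sym2 V) → ℝ[X]) :
    ∑ M ∈ (matchSet G s).filter (fun M => ¬ ∀ e ∈ M, u ∉ e), F M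
      = ∑ w ∈ nbrs G (s.erase u) u,
          ∑ M ∈ (matchSet G s).filter (fun M => s(u, w) ∈ M), F M := by
  classical
  rw [← Finset.sum_biUnion]
  · apply Finset.sum_congr _ (fun _ _ => rfl)
    ext M
    simp only [Finset.mem_biUnion, Finset.mem_filter, mem_nbrs]
    constructor
    · rintro ⟨hM, hcov⟩
      push_neg at hcov
      rcases hcov with ⟨e, he, hue⟩
      rcases Sym2.mem_iff_exists.1 hue with ⟨w, rfl⟩
      have hM' := mem_matchSet.1 hM
      have hadj : G.Adj u w := (G.mem_edgeSet).1 (hM'.1 _ he)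
      have hws : w ∈ s := hM'.2.1 _ he w (by simp)
      exact ⟨w, ⟨Finset.mem_erase.2 ⟨hadj.ne', hws⟩, hadj⟩, hM, he⟩
    · rintro ⟨w, ⟨hw, hadj⟩, hM, he⟩
      refine ⟨hM, ?_⟩
      push_neg
      exact ⟨s(u, w), he, by simp⟩
  · intro w hw w' hw' hne
    simp only [Finset.disjoint_left, Finset.mem_filter]
    rintro M ⟨hM, he⟩ ⟨-, he'⟩
    have hM' := mem_matchSet.1 hM
    by_cases heq : s(u, w) = s(u, w')
    · rw [Sym2.eq_iff] at heq
      rcases heq with ⟨-, rfl⟩ | ⟨rfl, rfl⟩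
      · exact hne rfl
      · exact hne rfl
    · exact hM'.2.2 _ he _ he' heq u (by simp) (by simp)

lemma sum_covered_single (G : SimpleGraph V) (s : Finset V) (u w : V) (hu : u ∈ s)
    (hw : w ∈ nbrs G (s.erase u) u) (F : Finset (Sym2 V) → ℝ[X]) :
    ∑ M ∈ (matchSet G s).filter (fun M => s(u, w) ∈ M), F M
      = ∑ M' ∈ matchSet G ((s.erase u).erase w), F (insert s(u, w) M') := by
  classical
  rcases mem_nbrs.1 hw with ⟨hws, hadj⟩
  have hwu : w ≠ u := Finset.ne_of_mem_erase hws
  refine Finset.sum_nbij' (fun M => M.erase s(u, w)) (fun M' => insert s(u, w) M')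
    ?_ ?_ ?_ ?_ ?_
  · -- erase maps into matchSet of smaller set
    intro M hM
    simp only [Finset.mem_filter] at hM
    obtain ⟨hM, he⟩ := hM
    obtain ⟨h1, h2, h3⟩ := mem_matchSet.1 hM
    rw [mem_matchSet]
    refine ⟨fun e hee => h1 e (Finset.mem_of_mem_erase hee), ?_, ?_⟩
    · intro e hee v hv
      have heM : e ∈ M := Finset.mem_of_mem_erase hee
      have hene : e ≠ s(u, w) := Finset.ne_of_mem_erase hee
      refine Finset.mem_erase.2 ⟨?_, Finset.mem_erase.2 ⟨?_, h2 e heM v hv⟩⟩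
      · rintro rfl
        exact h3 e heM _ he hene v hv (by simp)
      · rintro rfl
        exact h3 e heM _ he hene v hv (by simp)
    · intro e hee f hef hne
      exact h3 e (Finset.mem_of_mem_erase hee) f (Finset.mem_of_mem_erase hef) hne
  · -- insert maps into filter
    intro M' hM'
    obtain ⟨h1, h2, h3⟩ := mem_matchSet.1 hM'
    have hnotin : ∀ e ∈ M', ∀ v ∈ e, v ≠ u ∧ v ≠ w := by
      intro e he v hv
      have := h2 e he v hv
      rw [Finset.mem_erase, Finset.mem_erase] at this
      exact ⟨this.2.1, this.1⟩
    simp only [Finset.mem_filter]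
    refine ⟨mem_matchSet.2 ⟨?_, ?_, ?_⟩, by simp⟩
    · intro e he
      rcases Finset.mem_insert.1 he with rfl | he'
      · exact G.mem_edgeSet.2 hadj
      · exact h1 e he'
    · intro e he v hv
      rcases Finset.mem_insert.1 he with rfl | he'
      · rcases Sym2.mem_iff.1 hv with rfl | rfl
        · exact hu
        · exact Finset.mem_of_mem_erase hws
      · exact Finset.mem_of_mem_erase (Finset.mem_of_mem_erase (h2 e he' v hv))
    · intro e he f hf hef v hve hvf
      rcases Finset.mem_insert.1 he with rfl | he' <;>
        rcases Finset.mem_insert.1 hf with rfl | hf'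
      · exact hef rfl
      · rcases Sym2.mem_iff.1 hve with rfl | rfl
        · exact (hnotin f hf' v hvf).1 rfl
        · exact (hnotin f hf' v hvf).2 rfl
      · rcases Sym2.mem_iff.1 hvf with rfl | rfl
        · exact (hnotin e he' v hve).1 rfl
        · exact (hnotin e he' v hve).2 rfl
      · exact h3 e he' f hf' hef v hve hvf
  · -- left inverse
    intro M hM
    simp only [Finset.mem_filter] at hM
    exact Finset.insert_erase hM.2
  · -- right inverse
    intro M' hM'
    obtain ⟨h1, h2, h3⟩ := mem_matchSet.1 hM'
    apply Finset.erase_insert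
    intro hmem
    have := h2 _ hmem u (by simp)
    simp [Finset.mem_erase] at this
  · intro M hM
    simp only [Finset.mem_filter] at hM
    rw [Finset.insert_erase hM.2]

lemma card_erase_erase {s : Finset V} {u w : V} (hu : u ∈ s) (hw : w ∈ s.erase u) :
    ((s.erase u).erase w).card + 2 = s.card := by
  rw [Finset.card_erase_of_mem hw, Finset.card_erase_of_mem hu]
  have h1 : 1 ≤ s.card := Finset.card_pos.2 ⟨u, hu⟩
  have h2 : 2 ≤ s.card := by
    have := Finset.card_pos.2 ⟨w, hw⟩
    have := Finset.card_erase_of_mem hu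
    omega
  omega

lemma mp_recur (G : SimpleGraph V) (s : Finset V) (u : V) (hu : u ∈ s) :
    mp G s = X * mp G (s.erase u) -
      ∑ w ∈ nbrs G (s.erase u) u, mp G ((s.erase u).erase w) := by
  classical
  have hcard : s.card = (s.erase u).card + 1 := by
    rw [Finset.card_erase_of_mem hu]
    have : 1 ≤ s.card := Finset.card_pos.2 ⟨u, hu⟩
    omega
  rw [mp, ← Finset.sum_filter_add_sum_filter_not (matchSet G s) (fun M => ∀ e ∈ M, u ∉ e)]
  have hA : ∑ M ∈ (matchSet G s).filter (fun M => ∀ e ∈ M, u ∉ e),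
      ((-1 : ℝ[X]) ^ M.card * X ^ (s.card - 2 * M.card)) = X * mp G (s.erase u) := by
    rw [← matchSet_erase_eq_filter, mp, Finset.mul_sum]
    apply Finset.sum_congr rfl
    intro M hM
    have h2 : 2 * M.card ≤ (s.erase u).card := two_mul_card_le (mem_matchSet.1 hM)
    have : s.card - 2 * M.card = ((s.erase u).card - 2 * M.card) + 1 := by omega
    rw [this, pow_succ]
    ring
  have hB : ∑ M ∈ (matchSet G s).filter (fun M => ¬ ∀ e ∈ M, u ∉ e),
      ((-1 : ℝ[X]) ^ M.card * X ^ (s.card - 2 * M.card))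
      = - ∑ w ∈ nbrs G (s.erase u) u, mp G ((s.erase u).erase w) := by
    rw [sum_filter_covered G s u hu, ← Finset.sum_neg_distrib]
    apply Finset.sum_congr rfl
    intro w hw
    rw [sum_covered_single G s u w hu hw, mp, ← Finset.sum_neg_distrib]
    apply Finset.sum_congr rfl
    intro M' hM'
    obtain ⟨h1, h2, h3⟩ := mem_matchSet.1 hM'
    have hnotin : s(u, w) ∉ M' := by
      intro hmem
      have := h2 _ hmem u (by simp)
      simp [Finset.mem_erase] at this
    rw [Finset.card_insert_of_notMem hnotin]
    have hc2 : ((s.erase u).erase w).card + 2 = s.card := card_erase_erase hu (mem_nbrs.1 hw).1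
    have h2le : 2 * M'.card ≤ ((s.erase u).erase w).card := two_mul_card_le (mem_matchSet.1 hM')
    have hexp : s.card - 2 * (M'.card + 1) = ((s.erase u).erase w).card - 2 * M'.card := by omega
    rw [hexp, pow_succ]
    ring
  rw [hA, hB]
  ring



lemma attachWith_map_val {P : V → Prop} (e : Sym2 {a // P a})
    (h : ∀ v ∈ Sym2.map Subtype.val e, P v) : (Sym2.map Subtype.val e).attachWith h = e := by
  induction e with
  | _ a b => rfl

lemma attachWith_eq_of_map_val {P : V → Prop} {e : Sym2 V} {h : ∀ a ∈ e, P a}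
    {e' : Sym2 {a // P a}} (he : Sym2.map Subtype.val e' = e) : e.attachWith h = e' := by
  subst he
  exact attachWith_map_val e' h

lemma mem_of_mem_attachWith {P : V → Prop} {e : Sym2 V} {h : ∀ a ∈ e, P a} {v : {a // P a}}
    (hv : v ∈ e.attachWith h) : (v : V) ∈ e := by
  have h2 : (v : V) ∈ Sym2.map Subtype.val (e.attachWith h) := Sym2.mem_map.2 ⟨v, hv, rfl⟩
  rwa [Sym2.attachWith_map_subtypeVal] at h2

lemma induce_edge_iff (G : SimpleGraph V) (S : Set V) (e : Sym2 S) :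
    e ∈ (G.induce S).edgeSet ↔ Sym2.map Subtype.val e ∈ G.edgeSet := by
  induction e with
  | _ a b =>
    rw [Sym2.map_pair_eq]
    simp [SimpleGraph.mem_edgeSet]

lemma matchingPolynomial_eq_mp (G : SimpleGraph V) :
    matchingPolynomial G = mp G Finset.univ := by
  classical
  unfold matchingPolynomial mp
  apply Finset.sum_congr
  · ext M
    simp only [Finset.mem_filter, mem_matchSet, IsMatch, Finset.mem_univ, true_and]
    constructor
    · rintro ⟨h1, h3⟩
      exact ⟨h1, fun e he v hv => trivial, h3⟩
    · rintro ⟨h1, -, h3⟩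
      exact ⟨h1, h3⟩
  · intro M _
    rw [Nat.card_eq_fintype_card, ← Finset.card_univ]

lemma matchingPolynomial_induce (G : SimpleGraph V) (S : Set V) [DecidablePred (· ∈ S)] :
    matchingPolynomial (G.induce S) = mp G S.toFinset := by
  classical
  unfold matchingPolynomial mp
  refine Finset.sum_bij'
    (i := fun (M' : Finset (Sym2 S)) _ => M'.image (Sym2.map (Subtype.val : S → V)))
    (j := fun M hM => M.attach.image (fun x => Sym2.attachWith x.1
      (fun v hv => Set.mem_toFinset.1 ((mem_matchSet.1 hM).2.1 x.1 x.2 v hv))))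
    ?_ ?_ ?_ ?_ ?_
  · -- hi
    intro M' hM'
    simp only [Finset.mem_filter, Finset.mem_univ, true_and] at hM'
    obtain ⟨h1, h3⟩ := hM'
    rw [mem_matchSet]
    refine ⟨?_, ?_, ?_⟩
    · intro e he
      rcases Finset.mem_image.1 he with ⟨e', he', rfl⟩
      exact (induce_edge_iff G S e').1 (h1 e' he')
    · intro e he v hv
      rcases Finset.mem_image.1 he with ⟨e', he', rfl⟩
      rcases Sym2.mem_map.1 hv with ⟨a, ha, rfl⟩
      exact Set.mem_toFinset.2 a.2
    · intro e he f hf hef v hve hvf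
      rcases Finset.mem_image.1 he with ⟨e', he', rfl⟩
      rcases Finset.mem_image.1 hf with ⟨f', hf', rfl⟩
      rcases Sym2.mem_map.1 hve with ⟨a, ha, rfl⟩
      rcases Sym2.mem_map.1 hvf with ⟨b, hb, hba⟩
      have hab : b = a := Subtype.val_injective hba
      subst hab
      have hef' : e' ≠ f' := fun h => hef (by rw [h])
      exact h3 e' he' f' hf' hef' b ha hb
  · -- hj
    intro M hM
    obtain ⟨h1, h2, h3⟩ := mem_matchSet.1 hM
    simp only [Finset.mem_filter, Finset.mem_univ, true_and]
    constructor
    · intro e he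
      rcases Finset.mem_image.1 he with ⟨x, hx, rfl⟩
      rw [induce_edge_iff, Sym2.attachWith_map_subtypeVal]
      exact h1 x.1 x.2
    · intro e he f hf hef v hve hvf
      rcases Finset.mem_image.1 he with ⟨x, hx, rfl⟩
      rcases Finset.mem_image.1 hf with ⟨y, hy, rfl⟩
      have hxy : x.1 ≠ y.1 := by
        intro h
        exact hef (by cases x; cases y; subst h; rfl)
      exact h3 x.1 x.2 y.1 y.2 hxy v.1 (mem_of_mem_attachWith hve) (mem_of_mem_attachWith hvf)
  · -- left_inv
    intro M' hM'
    ext e''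
    constructor
    · intro h
      rcases Finset.mem_image.1 h with ⟨x, -, rfl⟩
      rcases Finset.mem_image.1 x.2 with ⟨e', he', hmap⟩
      rw [attachWith_eq_of_map_val hmap]
      exact he'
    · intro he''
      exact Finset.mem_image.2 ⟨⟨Sym2.map Subtype.val e'',
        Finset.mem_image.2 ⟨e'', he'', rfl⟩⟩, Finset.mem_attach _ _, attachWith_map_val e'' _⟩
  · -- right_inv
    intro M hM
    rw [Finset.image_image]
    refine Eq.trans (Finset.image_congr ?_) Finset.attach_image_val
    intro x hx
    exact Sym2.attachWith_map_subtypeVal _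
  · -- terms
    intro M' hM'
    have hcard : (M'.image (Sym2.map (Subtype.val : S → V))).card = M'.card :=
      Finset.card_image_of_injective _ (Sym2.map.injective Subtype.val_injective)
    rw [hcard, Nat.card_eq_fintype_card, ← Set.toFinset_card]


lemma herglotz (G : SimpleGraph V) (s : Finset V) :
    ∀ z : ℂ, 0 < z.im →
      (Polynomial.aeval z (mp G s) ≠ 0) ∧
      ∀ u ∈ s, 0 < ((Polynomial.aeval z (mp G s)) /
        (Polynomial.aeval z (mp G (s.erase u)))).im := by
  classical
  induction s using Finset.strongInduction with
  | _ s ih =>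
    intro z hz
    have key : ∀ u ∈ s, 0 < ((Polynomial.aeval z (mp G s)) /
        (Polynomial.aeval z (mp G (s.erase u)))).im := by
      intro u hu
      have hsub : s.erase u ⊂ s := Finset.erase_ssubset hu
      have hB : Polynomial.aeval z (mp G (s.erase u)) ≠ 0 := (ih _ hsub z hz).1
      have hrec : Polynomial.aeval z (mp G s)
          = z * Polynomial.aeval z (mp G (s.erase u))
            - ∑ w ∈ nbrs G (s.erase u) u, Polynomial.aeval z (mp G ((s.erase u).erase w)) := by
        rw [mp_recur G s u hu]
        simp
      have hratio : (Polynomial.aeval z (mp G s)) / (Polynomial.aeval z (mp G (s.erase u)))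
          = z - ∑ w ∈ nbrs G (s.erase u) u,
              (Polynomial.aeval z (mp G ((s.erase u).erase w)))
                / (Polynomial.aeval z (mp G (s.erase u))) := by
        rw [hrec, sub_div, mul_div_assoc, div_self hB, mul_one, Finset.sum_div]
      rw [hratio]
      have hterm : ∀ w ∈ nbrs G (s.erase u) u,
          ((Polynomial.aeval z (mp G ((s.erase u).erase w)))
            / (Polynomial.aeval z (mp G (s.erase u)))).im < 0 := by
        intro w hw
        have hws : w ∈ s.erase u := (mem_nbrs.1 hw).1
        have hR := (ih _ hsub z hz).2 w hws
        set R := (Polynomial.aeval z (mp G (s.erase u)))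
          / (Polynomial.aeval z (mp G ((s.erase u).erase w))) with hRdef
        have hRne : R ≠ 0 := by
          intro h0
          rw [h0] at hR
          simp at hR
        have hD : Polynomial.aeval z (mp G ((s.erase u).erase w)) ≠ 0 :=
          (ih _ (lt_of_le_of_lt (Finset.erase_subset w (s.erase u)) hsub) z hz).1
        have hinv : (Polynomial.aeval z (mp G ((s.erase u).erase w)))
            / (Polynomial.aeval z (mp G (s.erase u))) = R⁻¹ := by
          rw [hRdef, inv_div]
        rw [hinv, Complex.inv_im]
        apply div_neg_of_neg_of_pos
        · simpa using hR
        · exact Complex.normSq_pos.2 hRne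
      have hsum : (∑ w ∈ nbrs G (s.erase u) u,
          (Polynomial.aeval z (mp G ((s.erase u).erase w)))
            / (Polynomial.aeval z (mp G (s.erase u)))).im ≤ 0 := by
        rw [Complex.im_sum]
        exact Finset.sum_nonpos (fun w hw => le_of_lt (hterm w hw))
      rw [Complex.sub_im]
      linarith
    constructor
    · rcases Finset.eq_empty_or_nonempty s with rfl | ⟨u, hu⟩
      · rw [mp_empty]
        simp
      · intro h0
        have := key u hu
        rw [h0] at this
        simp at this
    · exact key

open Complex Filter Topology in

lemma sin_key (c : ℝ) (hc : c ≠ 0) (j : ℤ) (hj : 2 ≤ |j|)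
    (h : ∀ φ : ℝ, 0 < φ → φ < Real.pi → 0 ≤ c * Real.sin ((j:ℝ) * φ)) : False := by
  have hπ : (0:ℝ) < Real.pi := Real.pi_pos
  have hsin32 : Real.sin (3 * Real.pi / 2) = -1 := by
    have : 3 * Real.pi / 2 = Real.pi / 2 + Real.pi := by ring
    rw [this, Real.sin_add_pi, Real.sin_pi_div_two]
  rcases abs_le.1 (le_refl |j|) with _
  rcases le_or_gt 2 j with hj2 | hj2
  · have hjr : (2:ℝ) ≤ (j:ℝ) := by exact_mod_cast hj2
    have hjpos : (0:ℝ) < (j:ℝ) := by linarith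
    have e1 : (j:ℝ) * (Real.pi / (2 * j)) = Real.pi / 2 := by field_simp
    have e2 : (j:ℝ) * (3 * Real.pi / (2 * j)) = 3 * Real.pi / 2 := by field_simp
    have h1 := h (Real.pi / (2 * j)) (by positivity) (by
      rw [div_lt_iff₀ (by positivity)]
      nlinarith)
    have h2 := h (3 * Real.pi / (2 * j)) (by positivity) (by
      rw [div_lt_iff₀ (by positivity)]
      nlinarith)
    rw [e1, Real.sin_pi_div_two, mul_one] at h1
    rw [e2, hsin32] at h2
    have : c < 0 ∨ 0 < c := hc.lt_or_gt
    rcases this with h | h <;> nlinarith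
  · have hj2' : j ≤ -2 := by
      rcases abs_cases j with ⟨h1, h2⟩ | ⟨h1, h2⟩ <;> omega
    have hjr : (j:ℝ) ≤ -2 := by exact_mod_cast hj2'
    have hjneg : (j:ℝ) < 0 := by linarith
    have hj0 : (j:ℝ) ≠ 0 := by linarith
    have e1 : (j:ℝ) * (Real.pi / (2 * (-j))) = -(Real.pi / 2) := by
      field_simp
    have e2 : (j:ℝ) * (3 * Real.pi / (2 * (-j))) = -(3 * Real.pi / 2) := by
      rw [show (3 : ℝ) * Real.pi / (2 * (-(j:ℝ))) = 3 * (Real.pi / (2 * (-(j:ℝ)))) by ring,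
        show (j:ℝ) * (3 * (Real.pi / (2 * (-(j:ℝ))))) = 3 * ((j:ℝ) * (Real.pi / (2 * (-(j:ℝ))))) by ring, e1]
      ring
    have hnj : (0:ℝ) < (-j : ℝ) := by linarith
    have h1 := h (Real.pi / (2 * (-j:ℝ))) (by positivity) (by
      rw [div_lt_iff₀ (by positivity)]
      nlinarith)
    have h2 := h (3 * Real.pi / (2 * (-j:ℝ))) (by positivity) (by
      rw [div_lt_iff₀ (by positivity)]
      nlinarith)
    rw [e1, Real.sin_neg, Real.sin_pi_div_two] at h1
    rw [e2, Real.sin_neg, hsin32] at h2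
    have : c < 0 ∨ 0 < c := hc.lt_or_gt
    rcases this with h | h <;> nlinarith

open Complex Filter Topology in
lemma herglotz_mult_bound {A B : ℝ[X]} (hA : A ≠ 0) (hB : B ≠ 0)
    (h : ∀ z : ℂ, 0 < z.im → Polynomial.aeval z B ≠ 0 ∧
        0 < ((Polynomial.aeval z A) / (Polynomial.aeval z B)).im) (θ : ℝ) :
    (rootMultiplicity θ A : ℤ) ≤ rootMultiplicity θ B + 1 ∧
    (rootMultiplicity θ B : ℤ) ≤ rootMultiplicity θ A + 1 := by
  set m := rootMultiplicity θ A with hm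
  set k := rootMultiplicity θ B with hk
  set a := A /ₘ (X - C θ) ^ m with ha
  set b := B /ₘ (X - C θ) ^ k with hb
  have hfA : (X - C θ) ^ m * a = A := pow_mul_divByMonic_rootMultiplicity_eq A θ
  have hfB : (X - C θ) ^ k * b = B := pow_mul_divByMonic_rootMultiplicity_eq B θ
  have haθ : a.eval θ ≠ 0 := eval_divByMonic_pow_rootMultiplicity_ne_zero θ hA
  have hbθ : b.eval θ ≠ 0 := eval_divByMonic_pow_rootMultiplicity_ne_zero θ hB
  set c : ℝ := a.eval θ / b.eval θ with hc
  have hcne : c ≠ 0 := div_ne_zero haθ hbθ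
  set j : ℤ := (m : ℤ) - k with hj
  suffices hlt : |j| < 2 by
    rw [abs_lt] at hlt
    omega
  by_contra hge
  push_neg at hge
  refine sin_key c hcne j hge ?_
  intro φ hφ0 hφπ
  set w : ℂ := Complex.exp (φ * Complex.I) with hw
  have hwim : 0 < w.im := by
    rw [hw, Complex.exp_ofReal_mul_I_im]
    exact Real.sin_pos_of_pos_of_lt_pi hφ0 hφπ
  have hwne : w ≠ 0 := Complex.exp_ne_zero _
  have haθ' : Polynomial.aeval ((θ:ℂ)) a = ((a.eval θ : ℝ) : ℂ) := by
    rw [show ((θ:ℝ):ℂ) = algebraMap ℝ ℂ θ from rfl, aeval_algebraMap_apply]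
    simp
  have hbθ' : Polynomial.aeval ((θ:ℂ)) b = ((b.eval θ : ℝ) : ℂ) := by
    rw [show ((θ:ℝ):ℂ) = algebraMap ℝ ℂ θ from rfl, aeval_algebraMap_apply]
    simp
  -- the function of ε whose im we track
  set g : ℝ → ℂ := fun ε =>
    w ^ j * ((Polynomial.aeval ((θ:ℂ) + ε * w) a) / (Polynomial.aeval ((θ:ℂ) + ε * w) b))
    with hg
  have hg0 : (g 0).im = c * Real.sin ((j:ℝ) * φ) := by
    have : ((θ:ℂ) + (0:ℝ) * w) = ((θ:ℂ)) := by simp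
    rw [hg]
    simp only [this]
    rw [haθ', hbθ', ← Complex.ofReal_div, ← hc]
    have hwj : w ^ j = Complex.exp ((((j:ℝ) * φ : ℝ) : ℂ) * Complex.I) := by
      rw [hw, ← Complex.exp_int_mul]
      congr 1
      push_cast
      ring
    rw [hwj, Complex.mul_im, Complex.ofReal_im, Complex.ofReal_re, mul_zero, zero_add,
      Complex.exp_ofReal_mul_I_im]
    ring
  have hcont : ContinuousAt g 0 := by
    have hden : Polynomial.aeval ((θ:ℂ) + ((0:ℝ):ℂ) * w) b ≠ 0 := by
      simp only [Complex.ofReal_zero, zero_mul, add_zero]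
      rw [hbθ']
      exact_mod_cast hbθ
    have hline : ContinuousAt (fun ε : ℝ => ((θ:ℂ) + ε * w)) 0 := by fun_prop
    have hca : ContinuousAt (fun ε : ℝ => Polynomial.aeval ((θ:ℂ) + ε * w) a) 0 :=
      (a.continuous_aeval.continuousAt).comp hline
    have hcb : ContinuousAt (fun ε : ℝ => Polynomial.aeval ((θ:ℂ) + ε * w) b) 0 :=
      (b.continuous_aeval.continuousAt).comp hline
    exact continuousAt_const.mul (hca.div hcb hden)
  have hlim : Filter.Tendsto (fun ε => (g ε).im) (nhdsWithin (0:ℝ) (Set.Ioi 0)) (nhds ((g 0).im)) :=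
    ((Complex.continuous_im.continuousAt).comp hcont).tendsto.mono_left nhdsWithin_le_nhds
  have hge' : ∀ᶠ ε in nhdsWithin (0:ℝ) (Set.Ioi 0), 0 ≤ (g ε).im := by
    filter_upwards [self_mem_nhdsWithin] with ε hε
    have hε0 : (0:ℝ) < ε := hε
    set z : ℂ := (θ:ℂ) + ε * w with hz
    have hzim : 0 < z.im := by
      have : z.im = ε * w.im := by
        simp [hz, Complex.add_im, Complex.mul_im]
      rw [this]
      positivity
    obtain ⟨hBz, hpos⟩ := h z hzim
    have hεne : ((ε:ℂ)) ≠ 0 := by exact_mod_cast ne_of_gt hε0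
    have hεw : (ε : ℂ) * w ≠ 0 := mul_ne_zero hεne hwne
    have hzsub : z - algebraMap ℝ ℂ θ = (ε:ℂ) * w := by
      rw [hz]
      simp
    have hAz : Polynomial.aeval z A = ((ε:ℂ)*w) ^ m * Polynomial.aeval z a := by
      rw [← hfA, map_mul, map_pow, map_sub, aeval_X, aeval_C, hzsub]
    have hBz' : Polynomial.aeval z B = ((ε:ℂ)*w) ^ k * Polynomial.aeval z b := by
      rw [← hfB, map_mul, map_pow, map_sub, aeval_X, aeval_C, hzsub]
    have hbz : Polynomial.aeval z b ≠ 0 := by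
      intro h0
      rw [hBz', h0, mul_zero] at hBz
      exact hBz rfl
    have hratio : Polynomial.aeval z A / Polynomial.aeval z B
        = (((ε^j : ℝ)) : ℂ) * (w ^ j * (Polynomial.aeval z a / Polynomial.aeval z b)) := by
      rw [hAz, hBz', mul_div_mul_comm]
      rw [← zpow_natCast ((ε:ℂ)*w) m, ← zpow_natCast ((ε:ℂ)*w) k, ← zpow_sub₀ hεw, ← hj,
        mul_zpow, Complex.ofReal_zpow, mul_assoc]
    have him : (Polynomial.aeval z A / Polynomial.aeval z B).im = ε^j * (g ε).im := by
      rw [hratio, Complex.im_ofReal_mul]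
    rw [him] at hpos
    have hzp : (0:ℝ) < ε ^ j := zpow_pos hε0 j
    nlinarith
  have hfin := ge_of_tendsto hlim hge'
  rw [hg0] at hfin
  exact hfin


lemma interlace (G : SimpleGraph V) (s : Finset V) (u : V) (hu : u ∈ s) (θ : ℝ) :
    (rootMultiplicity θ (mp G s) : ℤ) ≤ rootMultiplicity θ (mp G (s.erase u)) + 1 ∧
    (rootMultiplicity θ (mp G (s.erase u)) : ℤ) ≤ rootMultiplicity θ (mp G s) + 1 :=
  herglotz_mult_bound (mp_ne_zero G s) (mp_ne_zero G (s.erase u))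
    (fun z hz => ⟨(herglotz G (s.erase u) z hz).1, (herglotz G s z hz).2 u hu⟩) θ

def IsSOS (p : ℝ[X]) : Prop := ∃ L : Multiset ℝ[X], p = (L.map (fun q => q ^ 2)).sum

lemma IsSOS.zero : IsSOS 0 := ⟨0, by simp⟩

lemma IsSOS.add {p q : ℝ[X]} (hp : IsSOS p) (hq : IsSOS q) : IsSOS (p + q) := by
  obtain ⟨L, rfl⟩ := hp
  obtain ⟨M, rfl⟩ := hq
  exact ⟨L + M, by rw [Multiset.map_add, Multiset.sum_add]⟩

lemma IsSOS.sq (p : ℝ[X]) : IsSOS (p ^ 2) := ⟨{p}, by simp⟩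

lemma IsSOS.finsum {α : Type*} {t : Finset α} {f : α → ℝ[X]} (h : ∀ a ∈ t, IsSOS (f a)) :
    IsSOS (∑ a ∈ t, f a) :=
  Finset.sum_induction f IsSOS (fun _ _ hx hy => hx.add hy) IsSOS.zero h

lemma nbrs_erase (G : SimpleGraph V) (t : Finset V) (u w : V) :
    nbrs G (t.erase w) u = (nbrs G t u).erase w := by
  ext v
  simp only [mem_nbrs, Finset.mem_erase]
  tauto

lemma godsil_identity (G : SimpleGraph V) (s : Finset V) :
    ∀ u w : V, u ∈ s → w ∈ s → u ≠ w →
    ∃ q : ℝ[X], IsSOS q ∧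
      ((G.Adj u w ∧ mp G (s.erase u) * mp G (s.erase w) - mp G s * mp G ((s.erase u).erase w)
          = mp G ((s.erase u).erase w) ^ 2 + q) ∨
       (¬ G.Adj u w ∧ mp G (s.erase u) * mp G (s.erase w)
          - mp G s * mp G ((s.erase u).erase w) = q)) := by
  induction s using Finset.strongInduction with
  | _ s ih =>
    intro u w hu hw huw
    have hws' : w ∈ s.erase u := Finset.mem_erase.2 ⟨Ne.symm huw, hw⟩
    have hus' : u ∈ s.erase w := Finset.mem_erase.2 ⟨huw, hu⟩
    have hcomm : (s.erase w).erase u = (s.erase u).erase w := Finset.erase_right_comm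
    have hrecA := mp_recur G s u hu
    have hrecC := mp_recur G (s.erase w) u hus'
    rw [hcomm, nbrs_erase] at hrecC
    set N := nbrs G (s.erase u) u with hN
    set B := mp G (s.erase u) with hB
    set D := mp G ((s.erase u).erase w) with hD
    have hkey : B * mp G (s.erase w) - mp G s * D
        = (∑ v ∈ N, mp G ((s.erase u).erase v) * D)
          - (∑ v ∈ N.erase w, B * mp G (((s.erase u).erase w).erase v)) := by
      rw [hrecA, hrecC, ← Finset.sum_mul, ← Finset.mul_sum]
      ring
    have hsum_sos : ∀ v ∈ N.erase w,
        IsSOS (mp G ((s.erase u).erase v) * D - B * mp G (((s.erase u).erase w).erase v)) := by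
      intro v hv
      have hvN : v ∈ N := Finset.mem_of_mem_erase hv
      have hvw : v ≠ w := Finset.ne_of_mem_erase hv
      have hvs' : v ∈ s.erase u := (mem_nbrs.1 hvN).1
      have hsub : s.erase u ⊂ s := Finset.erase_ssubset hu
      obtain ⟨q, hq, hcase⟩ := ih (s.erase u) hsub v w hvs' hws' hvw
      have hEcomm : ((s.erase u).erase v).erase w = ((s.erase u).erase w).erase v :=
        Finset.erase_right_comm
      rcases hcase with ⟨-, heq⟩ | ⟨-, heq⟩
      · rw [hEcomm] at heq
        rw [heq]
        exact (IsSOS.sq _).add hq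
      · rw [hEcomm] at heq
        rw [heq]
        exact hq
    by_cases hadj : G.Adj u w
    · have hwN : w ∈ N := mem_nbrs.2 ⟨hws', hadj⟩
      refine ⟨∑ v ∈ N.erase w,
        (mp G ((s.erase u).erase v) * D - B * mp G (((s.erase u).erase w).erase v)),
        IsSOS.finsum hsum_sos, Or.inl ⟨hadj, ?_⟩⟩
      have hsplit := (Finset.add_sum_erase N (fun v => mp G ((s.erase u).erase v) * D) hwN).symm
      rw [hkey, hsplit, ← hD, Finset.sum_sub_distrib]
      ring
    · have hwN : w ∉ N := fun hmem => hadj (mem_nbrs.1 hmem).2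
      refine ⟨∑ v ∈ N.erase w,
        (mp G ((s.erase u).erase v) * D - B * mp G (((s.erase u).erase w).erase v)),
        IsSOS.finsum hsum_sos, Or.inr ⟨hadj, ?_⟩⟩
      rw [hkey, Finset.erase_eq_of_notMem hwN, Finset.sum_sub_distrib]

lemma sos_mult (θ : ℝ) (L : Multiset ℝ[X]) {D : ℝ[X]} (hD : D ∈ L) (hD0 : D ≠ 0) :
    (L.map (fun p => p ^ 2)).sum ≠ 0 ∧
    rootMultiplicity θ ((L.map (fun p => p ^ 2)).sum) % 2 = 0 ∧
    rootMultiplicity θ ((L.map (fun p => p ^ 2)).sum) ≤ 2 * rootMultiplicity θ D := by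
  classical
  set L0 : Multiset ℝ[X] := L.filter (fun p => p ≠ 0) with hL0
  have hDL0 : D ∈ L0 := Multiset.mem_filter.2 ⟨hD, hD0⟩
  have hsum : (L.map (fun p => p ^ 2)).sum = (L0.map (fun p => p ^ 2)).sum := by
    conv_lhs => rw [← Multiset.filter_add_not (fun p => p ≠ 0) L]
    rw [Multiset.map_add, Multiset.sum_add, ← hL0]
    have : ∀ q ∈ (L.filter (fun p => ¬ p ≠ 0)).map (fun p => p ^ 2), q = 0 := by
      intro q hq
      rcases Multiset.mem_map.1 hq with ⟨p, hp, rfl⟩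
      have : p = 0 := by simpa using (Multiset.mem_filter.1 hp).2
      rw [this]
      ring
    rw [Multiset.sum_eq_zero this, add_zero]
  rw [hsum]
  set T : Finset ℕ := (L0.map (rootMultiplicity θ)).toFinset with hT
  have hTne : T.Nonempty := ⟨rootMultiplicity θ D,
    Multiset.mem_toFinset.2 (Multiset.mem_map.2 ⟨D, hDL0, rfl⟩)⟩
  set r := T.min' hTne with hr
  have hrle : ∀ p ∈ L0, r ≤ rootMultiplicity θ p := fun p hp =>
    Finset.min'_le T _ (Multiset.mem_toFinset.2 (Multiset.mem_map.2 ⟨p, hp, rfl⟩))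
  obtain ⟨p₀, hp₀L, hp₀r⟩ := Multiset.mem_map.1 (Multiset.mem_toFinset.1 (T.min'_mem hTne))
  have hp₀0 : p₀ ≠ 0 := (Multiset.mem_filter.1 hp₀L).2
  have hfac : ∀ p ∈ L0, (X - C θ) ^ r * (p /ₘ (X - C θ) ^ r) = p := by
    intro p hp
    have hdvd : (X - C θ) ^ r ∣ p :=
      dvd_trans (pow_dvd_pow _ (hrle p hp)) (pow_rootMultiplicity_dvd p θ)
    have hmon : ((X - C θ) ^ r).Monic := (monic_X_sub_C θ).pow r
    have h := modByMonic_add_div p ((X - C θ) ^ r)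
    rwa [(modByMonic_eq_zero_iff_dvd hmon).2 hdvd, zero_add] at h
  set H : ℝ[X] := (L0.map (fun p => (p /ₘ (X - C θ) ^ r) ^ 2)).sum with hH
  have hSH : (L0.map (fun p => p ^ 2)).sum = (X - C θ) ^ (2 * r) * H := by
    rw [hH, ← Multiset.sum_map_mul_left]
    apply congrArg
    apply Multiset.map_congr rfl
    intro p hp
    rw [show (2 : ℕ) * r = r * 2 from mul_comm 2 r, pow_mul, ← mul_pow, hfac p hp]
  have hHθ : H.eval θ ≠ 0 := by
    have heval : H.eval θ = ((L0.map (fun p => (eval θ (p /ₘ (X - C θ) ^ r)) ^ 2))).sum := by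
      rw [hH]
      rw [show (Polynomial.eval θ : ℝ[X] → ℝ) = (Polynomial.evalRingHom θ : ℝ[X] → ℝ) from rfl]
      rw [map_multiset_sum (Polynomial.evalRingHom θ), Multiset.map_map]
      apply congrArg
      apply Multiset.map_congr rfl
      intro p hp
      simp
    have hp₀pos : 0 < (eval θ (p₀ /ₘ (X - C θ) ^ r)) ^ 2 := by
      have : eval θ (p₀ /ₘ (X - C θ) ^ r) ≠ 0 := by
        rw [show r = rootMultiplicity θ p₀ from hp₀r.symm]
        exact eval_divByMonic_pow_rootMultiplicity_ne_zero θ hp₀0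
      positivity
    have hrest : 0 ≤ ((L0.erase p₀).map (fun p => (eval θ (p /ₘ (X - C θ) ^ r)) ^ 2)).sum := by
      apply Multiset.sum_nonneg
      intro x hx
      rcases Multiset.mem_map.1 hx with ⟨p, hp, rfl⟩
      positivity
    have hsplit : ((L0.map (fun p => (eval θ (p /ₘ (X - C θ) ^ r)) ^ 2))).sum
        = (eval θ (p₀ /ₘ (X - C θ) ^ r)) ^ 2
          + ((L0.erase p₀).map (fun p => (eval θ (p /ₘ (X - C θ) ^ r)) ^ 2)).sum := by
      conv_lhs => rw [← Multiset.cons_erase hp₀L]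
      rw [Multiset.map_cons, Multiset.sum_cons]
    rw [heval, hsplit]
    positivity
  have hHne : H ≠ 0 := fun h0 => hHθ (by rw [h0]; simp)
  have hpow_ne : ((X - C θ) ^ (2 * r) : ℝ[X]) ≠ 0 := pow_ne_zero _ (X_sub_C_ne_zero θ)
  have hSne : (L0.map (fun p => p ^ 2)).sum ≠ 0 := by
    rw [hSH]
    exact mul_ne_zero hpow_ne hHne
  have hmult : rootMultiplicity θ ((L0.map (fun p => p ^ 2)).sum) = 2 * r := by
    rw [hSH, rootMultiplicity_mul (mul_ne_zero hpow_ne hHne), rootMultiplicity_X_sub_C_pow,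
      rootMultiplicity_eq_zero (fun hroot => hHθ hroot), add_zero]
  refine ⟨hSne, ?_, ?_⟩
  · omega
  · rw [hmult]
    exact Nat.mul_le_mul_left 2 (hrle D hDL0)

lemma le_rm_sub {θ : ℝ} {p q : ℝ[X]} (hs : p - q ≠ 0) {n : ℕ}
    (hp : n ≤ rootMultiplicity θ p) (hq : n ≤ rootMultiplicity θ q) :
    n ≤ rootMultiplicity θ (p - q) := by
  rw [le_rootMultiplicity_iff hs]
  exact dvd_sub (dvd_trans (pow_dvd_pow _ hp) (pow_rootMultiplicity_dvd p θ))
    (dvd_trans (pow_dvd_pow _ hq) (pow_rootMultiplicity_dvd q θ))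

lemma rm_sub_eq_left {θ : ℝ} {p q : ℝ[X]} (hp : p ≠ 0) (hs : p - q ≠ 0)
    (h : rootMultiplicity θ p < rootMultiplicity θ q) :
    rootMultiplicity θ (p - q) = rootMultiplicity θ p := by
  refine le_antisymm ?_ (le_rm_sub hs le_rfl (le_of_lt h))
  by_contra hgt
  push_neg at hgt
  have h1 : (X - C θ) ^ (rootMultiplicity θ p + 1) ∣ (p - q) :=
    dvd_trans (pow_dvd_pow _ hgt) (pow_rootMultiplicity_dvd _ θ)
  have h2 : (X - C θ) ^ (rootMultiplicity θ p + 1) ∣ q :=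
    dvd_trans (pow_dvd_pow _ h) (pow_rootMultiplicity_dvd _ θ)
  have h3 : (X - C θ) ^ (rootMultiplicity θ p + 1) ∣ p := by
    have h4 := dvd_add h1 h2
    rwa [sub_add_cancel] at h4
  have := (le_rootMultiplicity_iff hp).2 h3
  omega

lemma core (G : SimpleGraph V) (θ : ℝ) (u w : V) (hadj : G.Adj u w)
    (hess : rootMultiplicity θ (mp G (Finset.univ.erase w)) + 1
      = rootMultiplicity θ (mp G (Finset.univ : Finset V)))
    (hnotess : rootMultiplicity θ (mp G (Finset.univ.erase u)) + 1
      ≠ rootMultiplicity θ (mp G (Finset.univ : Finset V))) :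
    rootMultiplicity θ (mp G (Finset.univ.erase u))
      = rootMultiplicity θ (mp G (Finset.univ : Finset V)) + 1 := by
  classical
  set A := mp G (Finset.univ : Finset V) with hA
  set B := mp G (Finset.univ.erase u) with hB
  set C := mp G (Finset.univ.erase w) with hC
  set D := mp G ((Finset.univ.erase u).erase w) with hD
  set m := rootMultiplicity θ A with hm
  set k := rootMultiplicity θ B with hk
  set c := rootMultiplicity θ C with hc
  set e := rootMultiplicity θ D with he
  obtain ⟨hb1, hb2⟩ := interlace G Finset.univ u (Finset.mem_univ u) θ
  rw [← hA, ← hB, ← hm, ← hk] at hb1 hb2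
  have hkcase : k = m ∨ k = m + 1 := by omega
  rcases hkcase with hkm | hkm
  · exfalso
    obtain ⟨q, hq, hcase⟩ := godsil_identity G Finset.univ u w
      (Finset.mem_univ u) (Finset.mem_univ w) hadj.ne
    rcases hcase with ⟨-, heq⟩ | ⟨hna, -⟩
    swap
    · exact hna hadj
    obtain ⟨L, rfl⟩ := hq
    have hsum : B * C - A * D = ((D ::ₘ L).map (fun p => p ^ 2)).sum := by
      rw [heq, Multiset.map_cons, Multiset.sum_cons]
    obtain ⟨hSne, hSeven, hSle⟩ := sos_mult θ (D ::ₘ L)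
      (Multiset.mem_cons_self D L) (mp_ne_zero G _)
    rw [← hsum] at hSne hSeven hSle
    have hBCne : B * C ≠ 0 := mul_ne_zero (mp_ne_zero G _) (mp_ne_zero G _)
    have hADne : A * D ≠ 0 := mul_ne_zero (mp_ne_zero G _) (mp_ne_zero G _)
    have hBC : rootMultiplicity θ (B * C) = k + c := rootMultiplicity_mul hBCne
    have hAD : rootMultiplicity θ (A * D) = m + e := rootMultiplicity_mul hADne
    rcases le_or_gt m e with hme | hme
    · have hlt : rootMultiplicity θ (B * C) < rootMultiplicity θ (A * D) := by omega
      have hfin := rm_sub_eq_left hBCne hSne hlt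
      rw [hBC] at hfin
      omega
    · have hn1 : m + e ≤ rootMultiplicity θ (B * C) := by omega
      have hn2 : m + e ≤ rootMultiplicity θ (A * D) := by omega
      have hfin := le_rm_sub hSne hn1 hn2
      omega
  · exact hkm

end MatchAux

theorem special_is_positive' {V : Type*} [Finite V] (θ : ℝ) (G : SimpleGraph V) (u : V)
    (h1 : ¬ (Polynomial.rootMultiplicity θ (matchingPolynomial (G.induce {v | v ≠ u})) + 1 =
      Polynomial.rootMultiplicity θ (matchingPolynomial G)))
    (h2 : ∃ w, G.Adj u w ∧ Polynomial.rootMultiplicity θ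
        (matchingPolynomial (G.induce {v | v ≠ w})) + 1 =
      Polynomial.rootMultiplicity θ (matchingPolynomial G)) :
    Polynomial.rootMultiplicity θ (matchingPolynomial (G.induce {v | v ≠ u})) =
      Polynomial.rootMultiplicity θ (matchingPolynomial G) + 1 := by
  classical
  have hft : Fintype V := Fintype.ofFinite V
  obtain ⟨w, hadj, hw⟩ := h2
  have htrans : ∀ x : V, matchingPolynomial (G.induce {v | v ≠ x})
      = MatchAux.mp G (Finset.univ.erase x) := by
    intro x
    rw [MatchAux.matchingPolynomial_induce G {v | v ≠ x}]
    congr 1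
    ext v
    simp
  rw [htrans, MatchAux.matchingPolynomial_eq_mp] at h1 hw ⊢
  exact MatchAux.core G θ u w hadj hw h1



-- statement 6
theorem special_is_positive {V : Type*} [Finite V] (θ : ℝ) (G : SimpleGraph V) (u : V)
    (h1 : ¬ IsEssential θ G u) (h2 : ∃ w, G.Adj u w ∧ IsEssential θ G w) :
    IsPositive θ G u := special_is_positive' θ G u h1 h2
end

section
/- Let θ ∈ ℝ, let G be a finite simple graph, and let a be a θ-essential vertex of G. If u ≠ a is a θ-positive vertex of G, then u is θ-positive in G−a; if u ≠ a is a θ-neutral vertex of G, then u is θ-neutral in G−a. -/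
open Polynomial

namespace GodsilAux
open Finset
open scoped Classical

section Analytic
lemma aeval_factor {P : Polynomial ℝ} {θ : ℝ} {n : ℕ} {P₁ : Polynomial ℝ}
    (hfac : (X - C θ) ^ n * P₁ = P) (z : ℂ) :
    aeval z P = (z - (θ:ℂ)) ^ n * aeval z P₁ := by
  rw [← hfac]
  simp

lemma aeval_ofReal (P : Polynomial ℝ) (θ : ℝ) :
    aeval (θ : ℂ) P = ((P.eval θ : ℝ) : ℂ) := by
  have h := eval₂_at_apply (algebraMap ℝ ℂ) θ (p := P)
  rw [aeval_def]
  simpa using h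

lemma continuous_aeval_complex (P : Polynomial ℝ) : Continuous fun z : ℂ => aeval z P := by
  have h : (fun z : ℂ => aeval z P) = fun z : ℂ => (P.map (algebraMap ℝ ℂ)).eval z := by
    funext z
    rw [aeval_def, eval_map]
  rw [h]
  exact (P.map (algebraMap ℝ ℂ)).continuous

lemma mult_le_of_herglotz {P Q : Polynomial ℝ} (hP : P ≠ 0) (hQ : Q ≠ 0)
    (h : ∀ z : ℂ, 0 < z.im → aeval z Q ≠ 0 ∧ 0 < ((aeval z P) / (aeval z Q)).im)
    (θ : ℝ) : rootMultiplicity θ P ≤ rootMultiplicity θ Q + 1 := by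
  by_contra hcon
  push_neg at hcon
  set m := rootMultiplicity θ P with hm
  set m' := rootMultiplicity θ Q with hm'
  obtain ⟨d, hd⟩ : ∃ d, m = m' + d := ⟨m - m', by omega⟩
  have hd2 : 2 ≤ d := by omega
  set P₁ := P /ₘ (X - C θ) ^ m with hP₁
  set Q₁ := Q /ₘ (X - C θ) ^ m' with hQ₁
  have hPfac : (X - C θ) ^ m * P₁ = P := pow_mul_divByMonic_rootMultiplicity_eq P θ
  have hQfac : (X - C θ) ^ m' * Q₁ = Q := pow_mul_divByMonic_rootMultiplicity_eq Q θ
  have hP₁θ : P₁.eval θ ≠ 0 := eval_divByMonic_pow_rootMultiplicity_ne_zero θ hP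
  have hQ₁θ : Q₁.eval θ ≠ 0 := eval_divByMonic_pow_rootMultiplicity_ne_zero θ hQ
  set c : ℝ := P₁.eval θ / Q₁.eval θ with hc0
  have hcne : c ≠ 0 := div_ne_zero hP₁θ hQ₁θ
  have hdpos : (0:ℝ) < (d:ℝ) := by exact_mod_cast Nat.lt_of_lt_of_le Nat.zero_lt_two hd2
  have hpi := Real.pi_pos
  set φ : ℝ := if 0 < c then 3 * Real.pi / (2 * d) else Real.pi / (2 * d) with hφ
  have hφpos : 0 < φ := by
    rw [hφ]; split <;> positivity
  have hφlt : φ < Real.pi := by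
    have hd2' : (2:ℝ) ≤ (d:ℝ) := by exact_mod_cast hd2
    rw [hφ]; split
    · rw [div_lt_iff₀ (by positivity)]
      nlinarith
    · rw [div_lt_iff₀ (by positivity)]
      nlinarith
  set ψ : ℝ := (d:ℝ) * φ with hψ
  have hsin : c * Real.sin ψ < 0 := by
    rw [hψ, hφ]
    rcases lt_or_ge 0 c with hc | hc
    · rw [if_pos hc]
      have harg : (d:ℝ) * (3 * Real.pi / (2 * d)) = Real.pi + Real.pi / 2 := by
        field_simp
        ring
      rw [harg, Real.sin_add]
      simp
      nlinarith
    · rw [if_neg (not_lt.2 hc)]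
      have harg : (d:ℝ) * (Real.pi / (2 * d)) = Real.pi / 2 := by
        field_simp
      rw [harg, Real.sin_pi_div_two, mul_one]
      cases lt_or_eq_of_le hc with
      | inl h => exact h
      | inr h => exact absurd h hcne
  set e : ℂ := Complex.exp ((φ:ℝ) * Complex.I) with he
  have heim : e.im = Real.sin φ := by
    rw [he, Complex.exp_ofReal_mul_I_im]
  have hene : e ≠ 0 := Complex.exp_ne_zero _
  have hsinφ : 0 < Real.sin φ := Real.sin_pos_of_pos_of_lt_pi hφpos hφlt
  set F : ℝ → ℂ := fun ε => Complex.exp ((ψ:ℂ) * Complex.I) *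
      (aeval ((θ:ℂ) + (ε:ℂ) * e) P₁ / aeval ((θ:ℂ) + (ε:ℂ) * e) Q₁) with hF
  -- key positivity for positive ε
  have key : ∀ ε : ℝ, 0 < ε → 0 < (F ε).im := by
    intro ε hε
    set z : ℂ := (θ:ℂ) + (ε:ℂ) * e with hz
    have hzim' : z.im = ε * Real.sin φ := by
      rw [hz]
      simp [Complex.add_im, Complex.mul_im, heim]
    have hzim : 0 < z.im := by rw [hzim']; exact mul_pos hε hsinφ
    obtain ⟨hQz, hquot⟩ := h z hzim
    have hQ₁z : aeval z Q₁ ≠ 0 := by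
      intro h0
      rw [aeval_factor hQfac, h0, mul_zero] at hQz
      exact hQz rfl
    have hzθ : z - (θ:ℂ) = (ε:ℂ) * e := by rw [hz]; ring
    have hed : e ^ d = Complex.exp ((ψ:ℂ) * Complex.I) := by
      rw [he, ← Complex.exp_nat_mul]
      congr 1
      rw [hψ]
      push_cast
      ring
    have hεne : ((ε:ℂ)) ≠ 0 := by exact_mod_cast hε.ne'
    have hquot_eq : aeval z P / aeval z Q = ((ε:ℝ)^d : ℝ) * F ε := by
      rw [hF]
      simp only [← hz]
      rw [aeval_factor hPfac, aeval_factor hQfac, hzθ, hd, pow_add]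
      rw [← hed]
      field_simp
      push_cast
      ring
    rw [hquot_eq] at hquot
    have hεd : (0:ℝ) < ε ^ d := by positivity
    have him : (((ε:ℝ)^d : ℝ) * F ε : ℂ).im = ε^d * (F ε).im := by
      rw [Complex.mul_im, Complex.ofReal_re, Complex.ofReal_im, zero_mul, add_zero]
    rw [him] at hquot
    by_contra hle
    push_neg at hle
    nlinarith
  -- continuity at 0
  have hcont : ContinuousAt (fun ε : ℝ => (F ε).im) 0 := by
    apply Complex.continuous_im.continuousAt.comp
    apply ContinuousAt.mul continuousAt_const
    have harg : Continuous fun ε : ℝ => (θ:ℂ) + (ε:ℂ) * e :=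
      continuous_const.add (Complex.continuous_ofReal.mul continuous_const)
    apply ContinuousAt.div
    · exact ((continuous_aeval_complex P₁).comp harg).continuousAt
    · exact ((continuous_aeval_complex Q₁).comp harg).continuousAt
    · show aeval ((θ:ℂ) + ((0:ℝ):ℂ) * e) Q₁ ≠ 0
      rw [Complex.ofReal_zero, zero_mul, add_zero, aeval_ofReal]
      exact_mod_cast hQ₁θ
  have hF0 : (F 0).im = Real.sin ψ * c := by
    rw [hF]
    simp only [Complex.ofReal_zero, zero_mul, add_zero]
    rw [aeval_ofReal, aeval_ofReal, ← Complex.ofReal_div, Complex.mul_im]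
    simp [Complex.exp_ofReal_mul_I_im, Complex.exp_ofReal_mul_I_re, hc0]
  have hneg : (F 0).im < 0 := by rw [hF0]; nlinarith
  have hev : ∀ᶠ ε in nhds (0:ℝ), (F ε).im < 0 :=
    Filter.Tendsto.eventually_lt_const hneg hcont
  have hev' : ∀ᶠ ε in nhdsWithin (0:ℝ) (Set.Ioi 0), (F ε).im < 0 :=
    hev.filter_mono nhdsWithin_le_nhds
  have hpos : ∀ᶠ ε in nhdsWithin (0:ℝ) (Set.Ioi 0), 0 < ε :=
    eventually_mem_nhdsWithin
  obtain ⟨ε, hεneg, hεpos⟩ := (hev'.and hpos).exists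
  exact absurd (key ε hεpos) (not_lt.2 hεneg.le)

lemma mult_interlace {P Q : Polynomial ℝ} (hP : P ≠ 0) (hQ : Q ≠ 0)
    (h : ∀ z : ℂ, 0 < z.im → aeval z Q ≠ 0 ∧ 0 < ((aeval z P) / (aeval z Q)).im) (θ : ℝ) :
    rootMultiplicity θ P ≤ rootMultiplicity θ Q + 1 ∧
      rootMultiplicity θ Q ≤ rootMultiplicity θ P + 1 := by
  refine ⟨mult_le_of_herglotz hP hQ h θ, ?_⟩
  have hneg : (-P : Polynomial ℝ) ≠ 0 := neg_ne_zero.2 hP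
  have h' : ∀ z : ℂ, 0 < z.im → aeval z (-P) ≠ 0 ∧ 0 < ((aeval z Q) / (aeval z (-P))).im := by
    intro z hz
    obtain ⟨hQz, him⟩ := h z hz
    have hPz : aeval z P ≠ 0 := by
      intro h0; rw [h0, zero_div] at him; simp at him
    have hquot : aeval z P / aeval z Q ≠ 0 := by
      intro h0; rw [h0] at him; simp at him
    refine ⟨by simpa using hPz, ?_⟩
    have hrw : aeval z Q / aeval z (-P) = -((aeval z P / aeval z Q)⁻¹) := by
      rw [map_neg, div_neg, inv_div]
    rw [hrw, Complex.neg_im, Complex.inv_im]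
    have hns : 0 < Complex.normSq (aeval z P / aeval z Q) := Complex.normSq_pos.2 hquot
    rw [neg_div, neg_neg]
    positivity
  have hres := mult_le_of_herglotz hQ hneg h' θ
  have hPP : rootMultiplicity θ (-P) = rootMultiplicity θ P := by
    have hC : (-P : Polynomial ℝ) = C (-1) * P := by
      simp
    rw [hC, rootMultiplicity_mul (by simpa using hP), rootMultiplicity_C, zero_add]
  omega


lemma eval_nonneg_of_isSumSq {P : Polynomial ℝ} (h : IsSumSq P) (x : ℝ) : 0 ≤ P.eval x := by
  induction h with
  | zero => simp
  | sq_add a _ ih =>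
    rw [eval_add, eval_mul]
    exact add_nonneg (mul_self_nonneg _) ih

lemma even_rootMultiplicity_of_nonneg {P : Polynomial ℝ} (hP : P ≠ 0)
    (hnn : ∀ x : ℝ, 0 ≤ P.eval x) (θ : ℝ) : Even (rootMultiplicity θ P) := by
  by_contra hodd
  rw [Nat.not_even_iff_odd] at hodd
  set m := rootMultiplicity θ P with hm
  set P₁ := P /ₘ (X - C θ) ^ m with hP₁
  have hPfac : (X - C θ) ^ m * P₁ = P := pow_mul_divByMonic_rootMultiplicity_eq P θ
  have hP₁θ : P₁.eval θ ≠ 0 := eval_divByMonic_pow_rootMultiplicity_ne_zero θ hP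
  have hcont : ContinuousAt (fun ε : ℝ => P₁.eval (θ + ε) * P₁.eval (θ - ε)) 0 := by
    apply ContinuousAt.mul
    · exact (P₁.continuous.comp (continuous_const.add continuous_id)).continuousAt
    · exact (P₁.continuous.comp (continuous_const.sub continuous_id)).continuousAt
  have h0 : (fun ε : ℝ => P₁.eval (θ + ε) * P₁.eval (θ - ε)) 0 = P₁.eval θ * P₁.eval θ := by
    simp
  have hpos0 : 0 < (fun ε : ℝ => P₁.eval (θ + ε) * P₁.eval (θ - ε)) 0 := by
    rw [h0]
    exact mul_self_pos.2 hP₁θ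
  have hev : ∀ᶠ ε in nhds (0:ℝ), 0 < P₁.eval (θ + ε) * P₁.eval (θ - ε) :=
    Filter.Tendsto.eventually_const_lt hpos0 hcont
  have hev' : ∀ᶠ ε in nhdsWithin (0:ℝ) (Set.Ioi 0),
      0 < P₁.eval (θ + ε) * P₁.eval (θ - ε) := hev.filter_mono nhdsWithin_le_nhds
  have hposf : ∀ᶠ ε in nhdsWithin (0:ℝ) (Set.Ioi 0), 0 < ε := eventually_mem_nhdsWithin
  obtain ⟨ε, hsame, hε⟩ := (hev'.and hposf).exists
  have hevalp : P.eval (θ + ε) = ε ^ m * P₁.eval (θ + ε) := by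
    rw [← hPfac]
    simp [eval_pow]
  have hevalm : P.eval (θ - ε) = (-ε) ^ m * P₁.eval (θ - ε) := by
    rw [← hPfac]
    simp [eval_pow]
  have hprod : P.eval (θ + ε) * P.eval (θ - ε) < 0 := by
    rw [hevalp, hevalm, hodd.neg_pow]
    have hεm : 0 < ε ^ m := pow_pos hε m
    nlinarith [mul_pos (mul_pos hεm hεm) hsame]
  nlinarith [hnn (θ + ε), hnn (θ - ε), hprod]


end Analytic

variable {V : Type*} [Fintype V]

def IsMatch (G : SimpleGraph V) (s : Finset V) (M : Finset (Sym2 V)) : Prop :=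
  (∀ e ∈ M, e ∈ G.edgeSet) ∧ (∀ e ∈ M, ∀ f ∈ M, e ≠ f → ∀ v, v ∈ e → v ∉ f) ∧
    (∀ e ∈ M, ∀ v, v ∈ e → v ∈ s)

noncomputable def mset (G : SimpleGraph V) (s : Finset V) : Finset (Finset (Sym2 V)) :=
  Finset.univ.filter (IsMatch G s)

lemma mem_mset {G : SimpleGraph V} {s : Finset V} {M : Finset (Sym2 V)} :
    M ∈ mset G s ↔ IsMatch G s M := by simp [mset]

noncomputable def mp (G : SimpleGraph V) (s : Finset V) : Polynomial ℝ :=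
  ∑ M ∈ mset G s, (-1 : Polynomial ℝ) ^ M.card * X ^ (s.card - 2 * M.card)

lemma card_filter_mem_sym2 {e : Sym2 V} (he : ¬ e.IsDiag) :
    (univ.filter (· ∈ e)).card = 2 := by
  induction e with
  | _ x y =>
    have hxy : x ≠ y := by simpa using he
    have h : univ.filter (· ∈ s(x,y)) = {x, y} := by
      ext v; simp [Sym2.mem_iff]
    rw [h, card_insert_of_notMem (by simp [hxy]), card_singleton]

lemma IsMatch.two_mul_card_le {G : SimpleGraph V} {s : Finset V} {M : Finset (Sym2 V)}
    (h : IsMatch G s M) : 2 * M.card ≤ s.card := by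
  obtain ⟨he, hd, hs⟩ := h
  have hdisj : ∀ e ∈ M, ∀ f ∈ M, e ≠ f →
      Disjoint (univ.filter (· ∈ e)) (univ.filter (· ∈ f)) := by
    intro e heM f hfM hef
    rw [Finset.disjoint_left]
    intro v hv hv'
    simp only [mem_filter] at hv hv'
    exact hd e heM f hfM hef v hv.2 hv'.2
  have hsub : M.biUnion (fun e => univ.filter (· ∈ e)) ⊆ s := by
    intro v hv
    simp only [mem_biUnion, mem_filter] at hv
    obtain ⟨e, heM, -, hve⟩ := hv
    exact hs e heM v hve
  calc 2 * M.card = ∑ e ∈ M, (univ.filter (· ∈ e)).card := by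
        rw [Finset.sum_congr rfl fun e heM =>
          card_filter_mem_sym2 ((G.not_isDiag_of_mem_edgeSet) (he e heM))]
        simp [mul_comm]
      _ = (M.biUnion (fun e => univ.filter (· ∈ e))).card := (Finset.card_biUnion hdisj).symm
      _ ≤ s.card := Finset.card_le_card hsub

lemma mp_ne_zero (G : SimpleGraph V) (s : Finset V) : mp G s ≠ 0 := by
  intro h0
  have hco : (mp G s).coeff s.card = 1 := by
    rw [mp, finset_sum_coeff]
    rw [Finset.sum_eq_single (∅ : Finset (Sym2 V))]
    · simp
    · intro M hM hMne
      have h2 : 2 * M.card ≤ s.card := (mem_mset.1 hM).two_mul_card_le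
      have hMc : M.card ≠ 0 := by simpa using hMne
      have : s.card - 2 * M.card ≠ s.card := by omega
      rw [← C_1, ← C_neg, ← C_pow, coeff_C_mul, coeff_X_pow, if_neg (fun h => this h.symm), mul_zero]
    · intro h
      exfalso
      exact h (mem_mset.2 ⟨by simp, by simp, by simp⟩)
  rw [h0] at hco
  simp at hco


lemma mp_rec {G : SimpleGraph V} {s : Finset V} {u : V} (hu : u ∈ s) :
    mp G s = X * mp G (s.erase u)
      - ∑ w ∈ (s.erase u).filter (G.Adj u), mp G ((s.erase u).erase w) := by
  have hcard : (s.erase u).card = s.card - 1 := card_erase_of_mem hu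
  have hpos : 0 < s.card := card_pos.2 ⟨u, hu⟩
  -- Part A : matchings avoiding u
  have hA : (mset G s).filter (fun M => ∀ e ∈ M, u ∉ e) = mset G (s.erase u) := by
    ext M
    simp only [mem_filter, mem_mset, IsMatch]
    constructor
    · rintro ⟨⟨h1, h2, h3⟩, h4⟩
      exact ⟨h1, h2, fun e he v hv => mem_erase.2 ⟨fun hvu => h4 e he (hvu ▸ hv), h3 e he v hv⟩⟩
    · rintro ⟨h1, h2, h3⟩
      exact ⟨⟨h1, h2, fun e he v hv => (mem_erase.1 (h3 e he v hv)).2⟩,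
        fun e he hue => (mem_erase.1 (h3 e he u hue)).1 rfl⟩
  have hApart : ∑ M ∈ (mset G s).filter (fun M => ∀ e ∈ M, u ∉ e),
      ((-1 : ℝ[X]) ^ M.card * X ^ (s.card - 2 * M.card)) = X * mp G (s.erase u) := by
    rw [hA, mp, Finset.mul_sum]
    refine Finset.sum_congr rfl fun M hM => ?_
    have h2 : 2 * M.card ≤ (s.erase u).card := (mem_mset.1 hM).two_mul_card_le
    have hexp : s.card - 2 * M.card = ((s.erase u).card - 2 * M.card) + 1 := by omega

    rw [hexp, pow_succ]
    ring
  -- Part B : matchings covering u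
  set N := (s.erase u).filter (G.Adj u) with hN
  have hBpart : ∑ M ∈ (mset G s).filter (fun M => ¬ ∀ e ∈ M, u ∉ e),
      ((-1 : ℝ[X]) ^ M.card * X ^ (s.card - 2 * M.card))
      = ∑ w ∈ N, -(mp G ((s.erase u).erase w)) := by
    have hrhs : ∑ w ∈ N, -(mp G ((s.erase u).erase w))
        = ∑ p ∈ N.sigma (fun w => mset G ((s.erase u).erase w)),
            ((-1 : ℝ[X]) ^ (p.2.card + 1) * X ^ (s.card - 2 * (p.2.card + 1))) := by
      rw [Finset.sum_sigma]
      refine Finset.sum_congr rfl fun w hw => ?_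
      rw [mp, ← Finset.sum_neg_distrib]
      refine Finset.sum_congr rfl fun M hM => ?_
      have hws : w ∈ s.erase u := (mem_filter.1 hw).1
      have hpos2 : 0 < (s.erase u).card := card_pos.2 ⟨w, hws⟩
      have hcc : ((s.erase u).erase w).card = s.card - 2 := by
        rw [card_erase_of_mem hws]; omega
      have h2 : 2 * M.card ≤ ((s.erase u).erase w).card := (mem_mset.1 hM).two_mul_card_le
      have hexp : s.card - 2 * (M.card + 1) = ((s.erase u).erase w).card - 2 * M.card := by omega
      rw [hexp, pow_succ]
      ring
    rw [hrhs]
    refine (Finset.sum_bij (fun p _ => insert s(u, p.1) p.2) ?_ ?_ ?_ ?_).symm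
    · -- membership
      rintro ⟨w, M⟩ hp
      obtain ⟨hw, hM⟩ := Finset.mem_sigma.1 hp
      obtain ⟨hws, hadj⟩ := Finset.mem_filter.1 hw
      obtain ⟨h1, h2, h3⟩ := mem_mset.1 hM
      have hwu : w ≠ u := (mem_erase.1 hws).1
      have hwsmem : w ∈ s := (mem_erase.1 hws).2
      have hsupp : ∀ e ∈ M, ∀ v, v ∈ e → v ≠ w ∧ v ≠ u ∧ v ∈ s := by
        intro e he v hv
        have h := h3 e he v hv
        rw [mem_erase, mem_erase] at h
        exact ⟨h.1, h.2.1, h.2.2⟩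
      rw [mem_filter, mem_mset]
      refine ⟨⟨?_, ?_, ?_⟩, ?_⟩
      · intro e he
        rcases Finset.mem_insert.1 he with rfl | heM
        · exact G.mem_edgeSet.2 hadj
        · exact h1 e heM
      · intro e he f hf hef v hv hvf
        rcases Finset.mem_insert.1 he with rfl | heM <;>
          rcases Finset.mem_insert.1 hf with rfl | hfM
        · exact hef rfl
        · rcases Sym2.mem_iff.1 hv with rfl | rfl
          · exact ((hsupp f hfM v hvf).2.1 rfl)
          · exact ((hsupp f hfM v hvf).1 rfl)
        · rcases Sym2.mem_iff.1 hvf with rfl | rfl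
          · exact ((hsupp e heM v hv).2.1 rfl)
          · exact ((hsupp e heM v hv).1 rfl)
        · exact h2 e heM f hfM hef v hv hvf
      · intro e he v hv
        rcases Finset.mem_insert.1 he with rfl | heM
        · rcases Sym2.mem_iff.1 hv with rfl | rfl
          · exact hu
          · exact hwsmem
        · exact (hsupp e heM v hv).2.2
      · intro hall
        exact hall s(u, w) (Finset.mem_insert_self _ _) (by simp)
    · -- injectivity
      rintro ⟨w, M⟩ hp ⟨w', M'⟩ hq heq
      obtain ⟨hw, hM⟩ := Finset.mem_sigma.1 hp
      obtain ⟨h1, h2, h3⟩ := mem_mset.1 hM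
      obtain ⟨hw', hM'⟩ := Finset.mem_sigma.1 hq
      obtain ⟨h1', h2', h3'⟩ := mem_mset.1 hM'
      have hMu : ∀ e ∈ M, u ∉ e := by
        intro e he hue
        have h := h3 e he u hue
        rw [mem_erase, mem_erase] at h
        exact h.2.1 rfl
      have hMu' : ∀ e ∈ M', u ∉ e := by
        intro e he hue
        have h := h3' e he u hue
        rw [mem_erase, mem_erase] at h
        exact h.2.1 rfl
      have heq' : insert s(u, w) M = insert s(u, w') M' := heq
      have hne : s(u, w) ∉ M := fun hh => hMu _ hh (by simp)
      have hne' : s(u, w') ∉ M' := fun hh => hMu' _ hh (by simp)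
      have hmem : s(u, w') ∈ insert s(u, w) M := by
        rw [heq']; exact Finset.mem_insert_self _ _
      have hew : s(u, w') = s(u, w) := by
        rcases Finset.mem_insert.1 hmem with h | h
        · exact h
        · exact (hMu _ h (by simp)).elim
      have hww : w = w' := (Sym2.congr_right.1 hew).symm
      have hMM : M = M' := by
        rw [← Finset.erase_insert hne, ← Finset.erase_insert hne', heq', hew]
      rw [hww, hMM]
    · -- surjectivity
      intro M hMf
      obtain ⟨hMm, hnot⟩ := Finset.mem_filter.1 hMf
      obtain ⟨h1, h2, h3⟩ := mem_mset.1 hMm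
      push_neg at hnot
      obtain ⟨e, heM, hue⟩ := hnot
      obtain ⟨w, rfl⟩ := Sym2.mem_iff_exists.1 hue
      have hadj : G.Adj u w := G.mem_edgeSet.1 (h1 _ heM)
      have hwu : w ≠ u := hadj.ne'
      have hws : w ∈ s := h3 _ heM w (by simp)
      have hsupp' : ∀ f ∈ M.erase s(u, w), ∀ v, v ∈ f → v ≠ u ∧ v ≠ w := by
        intro f hf v hv
        have hfM : f ∈ M := Finset.mem_of_mem_erase hf
        have hfe : f ≠ s(u, w) := (Finset.mem_erase.1 hf).1
        constructor
        · rintro rfl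
          exact h2 _ heM f hfM (Ne.symm hfe) _ (by simp) hv
        · rintro rfl
          exact h2 _ heM f hfM (Ne.symm hfe) _ (by simp) hv
      refine ⟨⟨w, M.erase s(u, w)⟩, ?_, ?_⟩
      · rw [Finset.mem_sigma]
        constructor
        · exact Finset.mem_filter.2 ⟨Finset.mem_erase.2 ⟨hwu, hws⟩, hadj⟩
        · rw [mem_mset]
          refine ⟨fun f hf => h1 f (Finset.mem_of_mem_erase hf),
            fun f hf g hg => h2 f (Finset.mem_of_mem_erase hf) g (Finset.mem_of_mem_erase hg),
            ?_⟩
          intro f hf v hv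
          rw [mem_erase, mem_erase]
          exact ⟨(hsupp' f hf v hv).2, (hsupp' f hf v hv).1,
            h3 f (Finset.mem_of_mem_erase hf) v hv⟩
      · exact Finset.insert_erase heM
    · -- values
      rintro ⟨w, M⟩ hp
      obtain ⟨hw, hM⟩ := Finset.mem_sigma.1 hp
      obtain ⟨h1, h2, h3⟩ := mem_mset.1 hM
      have hnotmem : s(u, w) ∉ M := fun hmem => by
        have := h3 _ hmem u (by simp)
        exact absurd rfl (mem_erase.1 (mem_erase.1 this).2).1
      rw [card_insert_of_notMem hnotmem]
  have := Finset.sum_filter_add_sum_filter_not (mset G s) (fun M => ∀ e ∈ M, u ∉ e)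
      (fun M => (-1 : ℝ[X]) ^ M.card * X ^ (s.card - 2 * M.card))
  rw [mp, ← this, hApart, hBpart, Finset.sum_neg_distrib]
  ring


lemma mp_empty (G : SimpleGraph V) : mp G (∅ : Finset V) = 1 := by
  have h : mset G (∅ : Finset V) = {∅} := by
    ext M
    simp only [mem_mset, IsMatch, Finset.mem_singleton]
    constructor
    · rintro ⟨h1, h2, h3⟩
      by_contra hne
      obtain ⟨e, he⟩ := Finset.nonempty_iff_ne_empty.2 hne
      induction e with
      | _ x y => exact absurd (h3 _ he x (by simp)) (Finset.notMem_empty x)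
    · rintro rfl; exact ⟨by simp, by simp, by simp⟩
  rw [mp, h]
  simp

lemma aeval_mp_rec {G : SimpleGraph V} {s : Finset V} {u : V} (hu : u ∈ s) (z : ℂ) :
    aeval z (mp G s) = z * aeval z (mp G (s.erase u))
      - ∑ w ∈ (s.erase u).filter (G.Adj u), aeval z (mp G ((s.erase u).erase w)) := by
  rw [mp_rec hu]
  simp

lemma herglotz (G : SimpleGraph V) (s : Finset V) {z : ℂ} (hz : 0 < z.im) :
    aeval z (mp G s) ≠ 0 ∧
      ∀ u ∈ s, 0 < ((aeval z (mp G s)) / (aeval z (mp G (s.erase u)))).im := by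
  induction s using Finset.strongInduction with
  | _ s IH =>
    have key : ∀ u ∈ s, 0 < ((aeval z (mp G s)) / (aeval z (mp G (s.erase u)))).im := by
      intro u hu
      have hsub : s.erase u ⊂ s := Finset.erase_ssubset hu
      have hA : aeval z (mp G (s.erase u)) ≠ 0 := (IH _ hsub).1
      rw [aeval_mp_rec hu, sub_div, Finset.sum_div, mul_div_cancel_right₀ _ hA]
      rw [Complex.sub_im, Complex.im_sum]
      have hterm : ∀ w ∈ (s.erase u).filter (G.Adj u),
          (aeval z (mp G ((s.erase u).erase w)) / aeval z (mp G (s.erase u))).im ≤ 0 := by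
        intro w hw
        have hwmem : w ∈ s.erase u := (Finset.mem_filter.1 hw).1
        have hsub2 : (s.erase u).erase w ⊂ s :=
          lt_of_le_of_lt (Finset.erase_subset _ _) hsub
        have hB : aeval z (mp G ((s.erase u).erase w)) ≠ 0 := (IH _ hsub2).1
        have hQ : 0 < ((aeval z (mp G (s.erase u))) /
            (aeval z (mp G ((s.erase u).erase w)))).im := (IH _ hsub).2 w hwmem
        have hrw : aeval z (mp G ((s.erase u).erase w)) / aeval z (mp G (s.erase u))
            = ((aeval z (mp G (s.erase u))) / (aeval z (mp G ((s.erase u).erase w))))⁻¹ :=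
          (inv_div _ _).symm
        rw [hrw, Complex.inv_im]
        apply div_nonpos_of_nonpos_of_nonneg
        · linarith
        · exact Complex.normSq_nonneg _
      have hsum : ∑ w ∈ (s.erase u).filter (G.Adj u),
          (aeval z (mp G ((s.erase u).erase w)) / aeval z (mp G (s.erase u))).im ≤ 0 :=
        Finset.sum_nonpos hterm
      linarith
    have hnz : aeval z (mp G s) ≠ 0 := by
      rcases s.eq_empty_or_nonempty with rfl | ⟨u, hu⟩
      · rw [mp_empty]; simp
      · intro h0
        have := key u hu
        rw [h0, zero_div] at this
        simp at this
    exact ⟨hnz, key⟩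


lemma isSumSq_W (G : SimpleGraph V) (s : Finset V) :
    ∀ u ∈ s, ∀ a ∈ s, u ≠ a →
    IsSumSq (mp G (s.erase u) * mp G (s.erase a) - mp G s * mp G ((s.erase u).erase a)) := by
  induction s using Finset.strongInduction with
  | _ s IH =>
    intro u hu a ha hua
    set t := s.erase u with ht
    have htsub : t ⊂ s := Finset.erase_ssubset hu
    have ha' : a ∈ t := Finset.mem_erase.2 ⟨Ne.symm hua, ha⟩
    have hu' : u ∈ s.erase a := Finset.mem_erase.2 ⟨hua, hu⟩
    set N := t.filter (G.Adj u) with hN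
    have hcomm : (s.erase a).erase u = t.erase a := Finset.erase_right_comm
    have hfilter : (t.erase a).filter (G.Adj u) = N.erase a := by rw [hN, Finset.filter_erase]
    have rec1 := mp_rec (G := G) hu
    rw [← ht] at rec1
    rw [← hN] at rec1
    have rec2' : mp G (s.erase a) = X * mp G (t.erase a)
        - ∑ w ∈ N.erase a, mp G ((t.erase w).erase a) := by
      rw [mp_rec hu', hcomm, hfilter]
      congr 1
      exact Finset.sum_congr rfl fun w hw => by rw [Finset.erase_right_comm]
    have hEq : mp G t * mp G (s.erase a) - mp G s * mp G (t.erase a)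
        = (if a ∈ N then mp G (t.erase a) * mp G (t.erase a) else 0)
          + ∑ w ∈ N.erase a,
              (mp G (t.erase w) * mp G (t.erase a) - mp G t * mp G ((t.erase w).erase a)) := by
      have step1 : mp G t * mp G (s.erase a) - mp G s * mp G (t.erase a)
          = (∑ w ∈ N, mp G (t.erase w)) * mp G (t.erase a)
            - mp G t * ∑ w ∈ N.erase a, mp G ((t.erase w).erase a) := by
        rw [rec1, rec2']; ring
      rw [step1, Finset.sum_mul, Finset.mul_sum, Finset.sum_sub_distrib]
      by_cases haN : a ∈ N
      · rw [if_pos haN,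
          ← Finset.add_sum_erase N (fun w => mp G (t.erase w) * mp G (t.erase a)) haN]
        ring
      · rw [if_neg haN, Finset.erase_eq_of_notMem haN]
        ring
    rw [hEq]
    have hsum : IsSumSq (∑ w ∈ N.erase a,
        (mp G (t.erase w) * mp G (t.erase a) - mp G t * mp G ((t.erase w).erase a))) := by
      apply Finset.sum_induction _ _ (fun x y hx hy => hx.add hy) IsSumSq.zero
      intro w hw
      have hwN : w ∈ N := Finset.mem_of_mem_erase hw
      have hwt : w ∈ t := (Finset.mem_filter.1 hwN).1
      have hwa : w ≠ a := (Finset.mem_erase.1 hw).1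
      exact IH t htsub w hwt a ha' hwa
    by_cases haN : a ∈ N
    · rw [if_pos haN]
      exact IsSumSq.sq_add _ hsum
    · rw [if_neg haN, zero_add]
      exact hsum


lemma matchingPolynomial_eq_mp (G : SimpleGraph V) :
    matchingPolynomial G = mp G Finset.univ := by
  unfold matchingPolynomial mp mset
  have h1 : Nat.card V = (Finset.univ : Finset V).card := by
    rw [Nat.card_eq_fintype_card, Finset.card_univ]
  refine Finset.sum_congr ?_ ?_
  · ext M
    simp [IsMatch]
  · intro M hM
    rw [h1]

lemma mp_induce (G : SimpleGraph V) (S : Set V) [Fintype S] (t : Finset S) :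
    mp (G.induce S) t = mp G (t.image Subtype.val) := by
  have hinj : Function.Injective (Sym2.map (Subtype.val : S → V)) :=
    Sym2.map.injective Subtype.val_injective
  have hvinj : Function.Injective (Subtype.val : S → V) := Subtype.val_injective
  have hedge : ∀ e : Sym2 S, e ∈ (G.induce S).edgeSet ↔ Sym2.map Subtype.val e ∈ G.edgeSet := by
    intro e
    induction e with
    | _ x y => simp [SimpleGraph.mem_edgeSet]
  have hcards : (t.image Subtype.val).card = t.card := Finset.card_image_of_injective t hvinj
  rw [mp, mp]
  refine Finset.sum_bij (fun M _ => M.image (Sym2.map Subtype.val)) ?_ ?_ ?_ ?_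
  · -- membership
    intro M hM
    obtain ⟨h1, h2, h3⟩ := mem_mset.1 hM
    rw [mem_mset]
    refine ⟨?_, ?_, ?_⟩
    · intro e' he'
      obtain ⟨e, he, rfl⟩ := Finset.mem_image.1 he'
      exact (hedge e).1 (h1 e he)
    · intro e' he' f' hf' hef v hv hvf
      obtain ⟨e, he, rfl⟩ := Finset.mem_image.1 he'
      obtain ⟨f, hf, rfl⟩ := Finset.mem_image.1 hf'
      obtain ⟨x, hx, rfl⟩ := Sym2.mem_map.1 hv
      obtain ⟨y, hy, hxy⟩ := Sym2.mem_map.1 hvf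
      have : y = x := hvinj hxy
      subst this
      exact h2 e he f hf (fun h => hef (by rw [h])) y hx hy
    · intro e' he' v hv
      obtain ⟨e, he, rfl⟩ := Finset.mem_image.1 he'
      obtain ⟨x, hx, rfl⟩ := Sym2.mem_map.1 hv
      exact Finset.mem_image_of_mem _ (h3 e he x hx)
  · -- injectivity
    intro M₁ h₁ M₂ h₂ heq
    exact Finset.image_injective hinj heq
  · -- surjectivity
    intro M hM
    obtain ⟨h1, h2, h3⟩ := mem_mset.1 hM
    have hrange : ∀ e ∈ M, ∃ e₀ : Sym2 S, Sym2.map Subtype.val e₀ = e := by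
      intro e he
      induction e with
      | _ x y =>
        have hx : x ∈ t.image Subtype.val := h3 _ he x (by simp)
        have hy : y ∈ t.image Subtype.val := h3 _ he y (by simp)
        obtain ⟨x₀, -, rfl⟩ := Finset.mem_image.1 hx
        obtain ⟨y₀, -, rfl⟩ := Finset.mem_image.1 hy
        exact ⟨s(x₀, y₀), by simp⟩
    refine ⟨M.preimage (Sym2.map Subtype.val) (hinj.injOn), ?_, ?_⟩
    · rw [mem_mset]
      refine ⟨?_, ?_, ?_⟩
      · intro e he
        rw [Finset.mem_preimage] at he
        exact (hedge e).2 (h1 _ he)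
      · intro e he f hf hef v hv hvf
        rw [Finset.mem_preimage] at he hf
        exact h2 _ he _ hf (fun h => hef (hinj h)) (↑v)
          (Sym2.mem_map.2 ⟨v, hv, rfl⟩) (Sym2.mem_map.2 ⟨v, hvf, rfl⟩)
      · intro e he v hv
        rw [Finset.mem_preimage] at he
        have : (↑v : V) ∈ t.image Subtype.val :=
          h3 _ he (↑v) (Sym2.mem_map.2 ⟨v, hv, rfl⟩)
        obtain ⟨w, hw, hwv⟩ := Finset.mem_image.1 this
        rwa [← hvinj hwv]
    · show (M.preimage (Sym2.map Subtype.val) (hinj.injOn)).image (Sym2.map Subtype.val) = M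
      rw [Finset.image_preimage]
      refine Finset.filter_true_of_mem ?_
      intro e he
      obtain ⟨e₀, he₀⟩ := hrange e he
      exact ⟨e₀, he₀⟩
  · -- values
    intro M hM
    rw [Finset.card_image_of_injective M hinj, hcards]


end GodsilAux

-- statement 11
open GodsilAux in
theorem positive_neutral_stable_under_deleting_essential {V : Type*} [Finite V] (θ : ℝ)
    (G : SimpleGraph V) (a : V) (ha : IsEssential θ G a) (u : V) (hu : u ≠ a) :
    (IsPositive θ G u → IsPositive θ (G.induce {v | v ≠ a}) ⟨u, hu⟩) ∧
    (IsNeutral θ G u → IsNeutral θ (G.induce {v | v ≠ a}) ⟨u, hu⟩) := by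
  classical
  have hfin : Fintype V := Fintype.ofFinite V
  -- translations to ambient finsets
  have hG : matchMult θ G = rootMultiplicity θ (mp G Finset.univ) := by
    rw [matchMult, matchingPolynomial_eq_mp]
  have himg1 : ∀ b : V, (Finset.univ : Finset ↥{v : V | v ≠ b}).image Subtype.val
      = Finset.univ.erase b := by
    intro b
    ext x
    constructor
    · intro hx
      obtain ⟨y, -, rfl⟩ := Finset.mem_image.1 hx
      exact Finset.mem_erase.2 ⟨y.2, Finset.mem_univ _⟩
    · intro hx
      exact Finset.mem_image.2 ⟨⟨x, (Finset.mem_erase.1 hx).1⟩, Finset.mem_univ _, rfl⟩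
  have ha_tr : matchMult θ (G.induce {v : V | v ≠ a})
      = rootMultiplicity θ (mp G (Finset.univ.erase a)) := by
    rw [matchMult, matchingPolynomial_eq_mp, mp_induce, himg1]
  have hu_tr : matchMult θ (G.induce {v : V | v ≠ u})
      = rootMultiplicity θ (mp G (Finset.univ.erase u)) := by
    rw [matchMult, matchingPolynomial_eq_mp, mp_induce, himg1]
  have hua_tr : matchMult θ ((G.induce {v : V | v ≠ a}).induce {w | w ≠ ⟨u, hu⟩})
      = rootMultiplicity θ (mp G ((Finset.univ.erase a).erase u)) := by
    rw [matchMult, matchingPolynomial_eq_mp, mp_induce, mp_induce]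
    congr 1
    congr 1
    ext x
    simp only [Finset.mem_image, Finset.mem_erase, Finset.mem_univ, and_true, true_and]
    constructor
    · rintro ⟨y, ⟨z, rfl⟩, rfl⟩
      exact ⟨fun hzu => z.2 (Subtype.ext hzu), z.1.2⟩
    · rintro ⟨hxu, hxa⟩
      exact ⟨⟨x, hxa⟩, ⟨⟨⟨x, hxa⟩, fun heq => hxu (congrArg Subtype.val heq)⟩, rfl⟩, rfl⟩
  -- numeric facts
  have hESS : rootMultiplicity θ (mp G (Finset.univ.erase a)) + 1
      = rootMultiplicity θ (mp G Finset.univ) := by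
    have h := ha
    unfold IsEssential at h
    rwa [ha_tr, hG] at h
  have hint : ∀ (s : Finset V) (x : V), x ∈ s →
      rootMultiplicity θ (mp G s) ≤ rootMultiplicity θ (mp G (s.erase x)) + 1 ∧
      rootMultiplicity θ (mp G (s.erase x)) ≤ rootMultiplicity θ (mp G s) + 1 := by
    intro s x hxs
    exact mult_interlace (mp_ne_zero G s) (mp_ne_zero G (s.erase x))
      (fun z hz => ⟨(herglotz G (s.erase x) hz).1, (herglotz G s hz).2 x hxs⟩) θ
  have hee : (Finset.univ.erase u).erase a = (Finset.univ.erase a).erase u :=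
    Finset.erase_right_comm
  have I2 := hint (Finset.univ.erase a) u (Finset.mem_erase.2 ⟨hu, Finset.mem_univ u⟩)
  have I3 := hint (Finset.univ.erase u) a (Finset.mem_erase.2 ⟨Ne.symm hu, Finset.mem_univ a⟩)
  rw [hee] at I3
  constructor
  · -- positive case
    intro hp
    unfold IsPositive at hp ⊢
    rw [hu_tr, hG] at hp
    rw [hua_tr, ha_tr]
    omega
  · -- neutral case
    intro hn
    unfold IsNeutral at hn ⊢
    rw [hu_tr, hG] at hn
    rw [hua_tr, ha_tr]
    by_cases hk : rootMultiplicity θ (mp G ((Finset.univ.erase a).erase u))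
        = rootMultiplicity θ (mp G (Finset.univ.erase a))
    · exact hk
    exfalso
    have hW : IsSumSq (mp G (Finset.univ.erase u) * mp G (Finset.univ.erase a)
        - mp G Finset.univ * mp G ((Finset.univ.erase a).erase u)) := by
      have h := isSumSq_W G Finset.univ u (Finset.mem_univ u) a (Finset.mem_univ a) hu
      rwa [hee] at h
    have hfne : mp G (Finset.univ.erase u) * mp G (Finset.univ.erase a) ≠ 0 :=
      mul_ne_zero (mp_ne_zero G _) (mp_ne_zero G _)
    have hgne : mp G Finset.univ * mp G ((Finset.univ.erase a).erase u) ≠ 0 :=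
      mul_ne_zero (mp_ne_zero G _) (mp_ne_zero G _)
    have hmf : rootMultiplicity θ
        (mp G (Finset.univ.erase u) * mp G (Finset.univ.erase a))
        = rootMultiplicity θ (mp G (Finset.univ.erase u))
          + rootMultiplicity θ (mp G (Finset.univ.erase a)) :=
      rootMultiplicity_mul hfne
    have hmg : rootMultiplicity θ
        (mp G Finset.univ * mp G ((Finset.univ.erase a).erase u))
        = rootMultiplicity θ (mp G Finset.univ)
          + rootMultiplicity θ (mp G ((Finset.univ.erase a).erase u)) :=
      rootMultiplicity_mul hgne
    by_cases hW0 : mp G (Finset.univ.erase u) * mp G (Finset.univ.erase a)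
        - mp G Finset.univ * mp G ((Finset.univ.erase a).erase u) = 0
    · have heqprod : mp G (Finset.univ.erase u) * mp G (Finset.univ.erase a)
          = mp G Finset.univ * mp G ((Finset.univ.erase a).erase u) := sub_eq_zero.1 hW0
      have h := congrArg (rootMultiplicity θ) heqprod
      rw [hmf, hmg] at h
      omega
    · have hd1 : (X - C θ) ^ (rootMultiplicity θ (mp G (Finset.univ.erase u))
          + rootMultiplicity θ (mp G (Finset.univ.erase a)))
          ∣ (mp G (Finset.univ.erase u) * mp G (Finset.univ.erase a)
            - mp G Finset.univ * mp G ((Finset.univ.erase a).erase u)) := by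
        apply dvd_sub
        · rw [← hmf]
          exact pow_rootMultiplicity_dvd _ θ
        · refine dvd_trans (pow_dvd_pow _ ?_) (hmg ▸ pow_rootMultiplicity_dvd
            (mp G Finset.univ * mp G ((Finset.univ.erase a).erase u)) θ)
          omega
      have hd2 : ¬ (X - C θ) ^ (rootMultiplicity θ (mp G (Finset.univ.erase u))
          + rootMultiplicity θ (mp G (Finset.univ.erase a)) + 1)
          ∣ (mp G (Finset.univ.erase u) * mp G (Finset.univ.erase a)
            - mp G Finset.univ * mp G ((Finset.univ.erase a).erase u)) := by
        intro hdvd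
        have hdg : (X - C θ) ^ (rootMultiplicity θ (mp G (Finset.univ.erase u))
            + rootMultiplicity θ (mp G (Finset.univ.erase a)) + 1)
            ∣ mp G Finset.univ * mp G ((Finset.univ.erase a).erase u) := by
          refine dvd_trans (pow_dvd_pow _ ?_) (hmg ▸ pow_rootMultiplicity_dvd
            (mp G Finset.univ * mp G ((Finset.univ.erase a).erase u)) θ)
          omega
        have hdf : (X - C θ) ^ (rootMultiplicity θ (mp G (Finset.univ.erase u))
            + rootMultiplicity θ (mp G (Finset.univ.erase a)) + 1)
            ∣ mp G (Finset.univ.erase u) * mp G (Finset.univ.erase a) := by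
          have hid : mp G (Finset.univ.erase u) * mp G (Finset.univ.erase a)
              = (mp G (Finset.univ.erase u) * mp G (Finset.univ.erase a)
                - mp G Finset.univ * mp G ((Finset.univ.erase a).erase u))
                + mp G Finset.univ * mp G ((Finset.univ.erase a).erase u) := by ring
          rw [hid]
          exact dvd_add hdvd hdg
        have hle := (le_rootMultiplicity_iff hfne).2 hdf
        omega
      have hmW : rootMultiplicity θ
          (mp G (Finset.univ.erase u) * mp G (Finset.univ.erase a)
            - mp G Finset.univ * mp G ((Finset.univ.erase a).erase u))
          = rootMultiplicity θ (mp G (Finset.univ.erase u))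
            + rootMultiplicity θ (mp G (Finset.univ.erase a)) := by
        refine le_antisymm ?_ ((le_rootMultiplicity_iff hW0).2 hd1)
        by_contra hgt
        push_neg at hgt
        exact hd2 (dvd_trans (pow_dvd_pow _ hgt) (pow_rootMultiplicity_dvd _ θ))
      have hev : Even (rootMultiplicity θ
          (mp G (Finset.univ.erase u) * mp G (Finset.univ.erase a)
            - mp G Finset.univ * mp G ((Finset.univ.erase a).erase u))) :=
        even_rootMultiplicity_of_nonneg hW0 (eval_nonneg_of_isSumSq hW) θ
      rw [hmW] at hev
      obtain ⟨j, hj⟩ := hev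
      omega
end

section
/- Let θ ∈ ℝ, let G be a finite simple graph, let a be a θ-neutral vertex of G, and let u ≠ a be another vertex. Then u is θ-essential in G if and only if u is θ-essential in G−a. -/
open Polynomial

set_option linter.unusedSectionVars false
set_option linter.unusedVariables false
set_option maxHeartbeats 1000000

namespace MatchingAux

open Finset

variable {V : Type*} [Fintype V] [DecidableEq V]

/-- `M` is a matching of `G` with all vertices inside `A`. -/
def IsMatching (G : SimpleGraph V) (A : Finset V) (M : Finset (Sym2 V)) : Prop :=
  (∀ e ∈ M, e ∈ G.edgeSet) ∧ (∀ e ∈ M, ∀ x ∈ e, x ∈ A) ∧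
    (∀ e ∈ M, ∀ f ∈ M, e ≠ f → ∀ v, v ∈ e → v ∉ f)

noncomputable def matchSet (G : SimpleGraph V) (A : Finset V) : Finset (Finset (Sym2 V)) :=
  @Finset.filter _ (IsMatching G A) (fun _ => Classical.propDecidable _) Finset.univ

lemma mem_matchSet {G : SimpleGraph V} {A : Finset V} {M : Finset (Sym2 V)} :
    M ∈ matchSet G A ↔ IsMatching G A M := by
  simp [matchSet]

/-- The matching polynomial restricted to vertex set `A`. -/
noncomputable def m (G : SimpleGraph V) (A : Finset V) : Polynomial ℝ :=
  ∑ M ∈ matchSet G A, (-1 : Polynomial ℝ) ^ M.card * X ^ (A.card - 2 * M.card)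

lemma empty_mem_matchSet {G : SimpleGraph V} {A : Finset V} : ∅ ∈ matchSet G A := by
  simp [mem_matchSet, IsMatching]

lemma sym2_filter_card {e : Sym2 V} (h : ¬ e.IsDiag) :
    (Finset.univ.filter (· ∈ e)).card = 2 := by
  induction e with
  | _ x y =>
    have hxy : x ≠ y := by simpa using h
    have : Finset.univ.filter (· ∈ s(x, y)) = {x, y} := by
      ext z; simp [Sym2.mem_iff]
    rw [this, card_insert_of_notMem (by simp [hxy]), card_singleton]

lemma matching_card_le {G : SimpleGraph V} {A : Finset V} {M : Finset (Sym2 V)}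
    (hM : IsMatching G A M) : 2 * M.card ≤ A.card := by
  classical
  have hdisj : ∀ e ∈ M, ∀ f ∈ M, e ≠ f →
      Disjoint (Finset.univ.filter (· ∈ e)) (Finset.univ.filter (· ∈ f)) := by
    intro e he f hf hef
    rw [Finset.disjoint_left]
    intro x hx hx'
    simp only [mem_filter, mem_univ, true_and] at hx hx'
    exact hM.2.2 e he f hf hef x hx hx'
  have hcard : (M.biUnion fun e => Finset.univ.filter (· ∈ e)).card = 2 * M.card := by
    rw [Finset.card_biUnion hdisj]
    rw [Finset.sum_congr rfl fun e he =>
      sym2_filter_card (G.not_isDiag_of_mem_edgeSet (hM.1 e he))]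
    simp [mul_comm]
  have hsub : (M.biUnion fun e => Finset.univ.filter (· ∈ e)) ⊆ A := by
    intro x hx
    simp only [Finset.mem_biUnion, mem_filter, mem_univ, true_and] at hx
    obtain ⟨e, he, hxe⟩ := hx
    exact hM.2.1 e he x hxe
  calc 2 * M.card = _ := hcard.symm
    _ ≤ A.card := Finset.card_le_card hsub

lemma matchSet_empty {G : SimpleGraph V} : matchSet G (∅ : Finset V) = {∅} := by
  ext M
  simp only [mem_matchSet, IsMatching, Finset.mem_singleton]
  constructor
  · rintro ⟨-, h2, -⟩
    by_contra hne
    obtain ⟨e, he⟩ := Finset.nonempty_iff_ne_empty.2 hne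
    induction e with
    | _ x y => exact absurd (h2 _ he x (Sym2.mem_mk_left x y)) (by simp)
  · rintro rfl
    simp

lemma m_empty {G : SimpleGraph V} : m G (∅ : Finset V) = 1 := by
  rw [m, matchSet_empty]
  simp

lemma m_coeff_card {G : SimpleGraph V} (A : Finset V) : (m G A).coeff A.card = 1 := by
  rw [m, finset_sum_coeff]
  have : ∀ M ∈ matchSet G A,
      ((-1 : Polynomial ℝ) ^ M.card * X ^ (A.card - 2 * M.card)).coeff A.card
        = if M = ∅ then 1 else 0 := by
    intro M hM
    have hle := matching_card_le (mem_matchSet.1 hM)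
    have h1 : ((-1 : Polynomial ℝ) ^ M.card) = C ((-1 : ℝ) ^ M.card) := by
      simp [map_pow]
    rw [h1, coeff_C_mul, coeff_X_pow]
    by_cases hME : M = ∅
    · subst hME; simp
    · have hpos : 0 < M.card := Finset.card_pos.2 (Finset.nonempty_iff_ne_empty.2 hME)
      rw [if_neg (by omega), if_neg hME]
      ring
  rw [Finset.sum_congr rfl this, Finset.sum_ite_eq' (matchSet G A) ∅ (fun _ => (1 : ℝ))]
  simp [empty_mem_matchSet]

lemma m_ne_zero {G : SimpleGraph V} (A : Finset V) : m G A ≠ 0 := by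
  intro h
  have := m_coeff_card (G := G) A
  rw [h] at this
  simp at this


noncomputable def nbr (G : SimpleGraph V) (A : Finset V) (u : V) : Finset V :=
  @Finset.filter _ (fun w => G.Adj u w) (fun _ => Classical.propDecidable _) (A.erase u)

lemma mem_nbr {G : SimpleGraph V} {A : Finset V} {u w : V} :
    w ∈ nbr G A u ↔ w ≠ u ∧ w ∈ A ∧ G.Adj u w := by
  simp [nbr, Finset.mem_erase, and_assoc]

lemma recurrence (G : SimpleGraph V) {A : Finset V} {u : V} (hu : u ∈ A) :
    m G A = X * m G (A.erase u)
      - ∑ w ∈ nbr G A u, m G ((A.erase u).erase w) := by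
  classical
  have hcardA : 1 ≤ A.card := Finset.card_pos.2 ⟨u, hu⟩
  have hAu : (A.erase u).card = A.card - 1 := Finset.card_erase_of_mem hu
  have hsplit := Finset.sum_filter_add_sum_filter_not (matchSet G A)
    (fun M => ∀ e ∈ M, u ∉ e)
    (fun M => (-1 : Polynomial ℝ) ^ M.card * X ^ (A.card - 2 * M.card))
  -- first part: matchings avoiding u
  have hfil1 : (matchSet G A).filter (fun M => ∀ e ∈ M, u ∉ e) = matchSet G (A.erase u) := by
    ext M
    simp only [Finset.mem_filter, mem_matchSet, IsMatching]
    constructor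
    · rintro ⟨⟨h1, h2, h3⟩, h4⟩
      exact ⟨h1, fun e he x hx => Finset.mem_erase.2
        ⟨fun hxu => h4 e he (hxu ▸ hx), h2 e he x hx⟩, h3⟩
    · rintro ⟨h1, h2, h3⟩
      exact ⟨⟨h1, fun e he x hx => (Finset.mem_erase.1 (h2 e he x hx)).2, h3⟩,
        fun e he hue => (Finset.mem_erase.1 (h2 e he u hue)).1 rfl⟩
  have hpart1 : ∑ M ∈ matchSet G (A.erase u),
      (-1 : Polynomial ℝ) ^ M.card * X ^ (A.card - 2 * M.card) = X * m G (A.erase u) := by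
    rw [m, Finset.mul_sum]
    refine Finset.sum_congr rfl fun M hM => ?_
    have hle := matching_card_le (mem_matchSet.1 hM)
    rw [hAu] at hle
    have hexp : A.card - 2 * M.card = ((A.erase u).card - 2 * M.card) + 1 := by
      rw [hAu]; omega
    rw [hexp, pow_succ]
    ring
  -- second part: matchings covering u
  set N := nbr G A u with hN
  have hfil2 : (matchSet G A).filter (fun M => ¬ ∀ e ∈ M, u ∉ e)
      = N.biUnion (fun w => (matchSet G ((A.erase u).erase w)).image (insert s(u, w))) := by
    ext M
    simp only [Finset.mem_filter, Finset.mem_biUnion, Finset.mem_image]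
    constructor
    · rintro ⟨hMmem, hM2⟩
      have hM := mem_matchSet.1 hMmem
      push_neg at hM2
      obtain ⟨e, he, hue⟩ := hM2
      set w := Sym2.Mem.other hue with hwdef
      have hew : s(u, w) = e := Sym2.other_spec hue
      have hadj : G.Adj u w := by rw [← SimpleGraph.mem_edgeSet, hew]; exact hM.1 e he
      have hwe : w ∈ e := by rw [← hew]; exact Sym2.mem_mk_right u w
      have hwA : w ∈ A := hM.2.1 e he w hwe
      refine ⟨w, mem_nbr.2 ⟨hadj.ne', hwA, hadj⟩, M.erase e, mem_matchSet.2 ?_, ?_⟩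
      · refine ⟨fun f hf => hM.1 f (Finset.mem_of_mem_erase hf), ?_, ?_⟩
        · intro f hf x hx
          have hfM := Finset.mem_of_mem_erase hf
          have hfe : f ≠ e := Finset.ne_of_mem_erase hf
          have hef : e ≠ f := fun h => hfe h.symm
          have hxu : x ≠ u := fun h => hM.2.2 e he f hfM hef u hue (h ▸ hx)
          have hxw : x ≠ w := fun h => hM.2.2 e he f hfM hef w hwe (h ▸ hx)
          exact Finset.mem_erase.2 ⟨hxw, Finset.mem_erase.2 ⟨hxu, hM.2.1 f hfM x hx⟩⟩
        · intro f hf g hg hfg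
          exact hM.2.2 f (Finset.mem_of_mem_erase hf) g (Finset.mem_of_mem_erase hg) hfg
      · rw [hew]; exact Finset.insert_erase he
    · rintro ⟨w, hwN, M₀, hM₀mem, rfl⟩
      obtain ⟨hwu, hwA, hadj⟩ := mem_nbr.1 hwN
      have hM₀ := mem_matchSet.1 hM₀mem
      have hM₀v : ∀ f ∈ M₀, ∀ x ∈ f, x ≠ u ∧ x ≠ w ∧ x ∈ A := by
        intro f hf x hx
        have h := Finset.mem_erase.1 (hM₀.2.1 f hf x hx)
        have h2 := Finset.mem_erase.1 h.2
        exact ⟨h2.1, h.1, h2.2⟩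
      have hedge : s(u, w) ∈ G.edgeSet := by rwa [SimpleGraph.mem_edgeSet]
      refine ⟨?_, ?_⟩
      · refine mem_matchSet.2 ⟨?_, ?_, ?_⟩
        · intro e he
          rcases Finset.mem_insert.1 he with rfl | he'
          · exact hedge
          · exact hM₀.1 e he'
        · intro e he x hx
          rcases Finset.mem_insert.1 he with rfl | he'
          · rcases Sym2.mem_iff.1 hx with rfl | rfl
            · exact hu
            · exact hwA
          · exact (hM₀v e he' x hx).2.2
        · intro e he f hf hef x hxe
          rcases Finset.mem_insert.1 he with rfl | he'
          · rcases Finset.mem_insert.1 hf with rfl | hf'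
            · exact absurd rfl hef
            · rcases Sym2.mem_iff.1 hxe with rfl | rfl
              · exact fun hxf => (hM₀v f hf' _ hxf).1 rfl
              · exact fun hxf => (hM₀v f hf' _ hxf).2.1 rfl
          · rcases Finset.mem_insert.1 hf with rfl | hf'
            · intro hxf
              rcases Sym2.mem_iff.1 hxf with h | h
              · exact (hM₀v e he' x hxe).1 h
              · exact (hM₀v e he' x hxe).2.1 h
            · exact hM₀.2.2 e he' f hf' hef x hxe
      · intro hall
        exact hall s(u, w) (Finset.mem_insert_self _ _) (Sym2.mem_mk_left u w)
  -- not-mem facts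
  have hnotmem : ∀ w, w ∈ N → ∀ M₀ ∈ matchSet G ((A.erase u).erase w), s(u, w) ∉ M₀ := by
    intro w hw M₀ hM₀mem hmem
    have hM₀ := mem_matchSet.1 hM₀mem
    have := hM₀.2.1 _ hmem u (Sym2.mem_mk_left u w)
    exact (Finset.mem_erase.1 (Finset.mem_erase.1 this).2).1 rfl
  have hdisj : (↑N : Set V).PairwiseDisjoint
      (fun w => (matchSet G ((A.erase u).erase w)).image (insert s(u, w))) := by
    intro w₁ hw₁ w₂ hw₂ hne
    rw [Function.onFun, Finset.disjoint_left]
    rintro M hM₁ hM₂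
    simp only [Finset.mem_image] at hM₁ hM₂
    obtain ⟨M₁, hM₁mem, rfl⟩ := hM₁
    obtain ⟨M₂, hM₂mem, hM₂eq⟩ := hM₂
    have hw₂u : w₂ ≠ u := (mem_nbr.1 (by exact_mod_cast hw₂)).1
    have : s(u, w₂) ∈ insert s(u, w₁) M₁ := by rw [← hM₂eq]; exact Finset.mem_insert_self _ _
    rcases Finset.mem_insert.1 this with h | h
    · rcases Sym2.eq_iff.1 h with ⟨-, h2⟩ | ⟨-, h2⟩
      · exact hne h2.symm
      · exact hw₂u h2
    · have := (mem_matchSet.1 hM₁mem).2.1 _ h u (Sym2.mem_mk_left u w₂)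
      exact (Finset.mem_erase.1 (Finset.mem_erase.1 this).2).1 rfl
  have hpart2 : ∑ M ∈ (matchSet G A).filter (fun M => ¬ ∀ e ∈ M, u ∉ e),
      (-1 : Polynomial ℝ) ^ M.card * X ^ (A.card - 2 * M.card)
      = - ∑ w ∈ N, m G ((A.erase u).erase w) := by
    rw [hfil2, Finset.sum_biUnion hdisj]
    rw [← Finset.sum_neg_distrib]
    refine Finset.sum_congr rfl fun w hw => ?_
    rw [Finset.sum_image (fun M₁ h₁ M₂ h₂ heq => by
      have h₁' := hnotmem w hw M₁ h₁
      have h₂' := hnotmem w hw M₂ h₂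
      rw [← Finset.erase_insert h₁', heq, Finset.erase_insert h₂'])]
    rw [m, ← Finset.sum_neg_distrib]
    refine Finset.sum_congr rfl fun M₀ hM₀mem => ?_
    have hnm := hnotmem w hw M₀ hM₀mem
    have hwAu : w ∈ A.erase u := Finset.mem_erase.2 ⟨(mem_nbr.1 hw).1, (mem_nbr.1 hw).2.1⟩
    have hcard2 : ((A.erase u).erase w).card = A.card - 2 := by
      rw [Finset.card_erase_of_mem hwAu, hAu]; omega
    have hle := matching_card_le (mem_matchSet.1 hM₀mem)
    rw [Finset.card_insert_of_notMem hnm]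
    have hexp : A.card - 2 * (M₀.card + 1) = ((A.erase u).erase w).card - 2 * M₀.card := by
      rw [hcard2]; omega
    rw [hexp, pow_succ]
    ring
  rw [m, ← hsplit, hfil1, hpart1, hpart2]
  ring


/-- A polynomial is a sum of squares. -/
def IsSOS (f : Polynomial ℝ) : Prop :=
  ∃ L : Multiset (Polynomial ℝ), f = (L.map (fun g => g ^ 2)).sum

lemma IsSOS.zero : IsSOS 0 := ⟨0, by simp⟩

lemma IsSOS.sq (f : Polynomial ℝ) : IsSOS (f ^ 2) := ⟨{f}, by simp⟩

lemma IsSOS.add {f g : Polynomial ℝ} (hf : IsSOS f) (hg : IsSOS g) : IsSOS (f + g) := by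
  obtain ⟨L₁, rfl⟩ := hf
  obtain ⟨L₂, rfl⟩ := hg
  exact ⟨L₁ + L₂, by rw [Multiset.map_add, Multiset.sum_add]⟩

/-- Structure theorem for sums of squares of real polynomials. -/
lemma sos_structure (θ : ℝ) (L : Multiset (Polynomial ℝ)) :
    (∀ g ∈ L, g = 0) ∨
    ∃ k h, (L.map (fun g => g ^ 2)).sum = (X - C θ) ^ (2 * k) * h ∧ 0 < h.eval θ ∧
      ∀ g ∈ L, (X - C θ) ^ k ∣ g := by
  induction L using Multiset.induction with
  | empty => exact Or.inl (by simp)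
  | cons a L ih =>
    by_cases ha : a = 0
    · rcases ih with hall | ⟨k, h, hsum, hpos, hdvd⟩
      · exact Or.inl (by
          intro g hg
          rcases Multiset.mem_cons.1 hg with rfl | hg'
          · exact ha
          · exact hall g hg')
      · refine Or.inr ⟨k, h, ?_, hpos, ?_⟩
        · rw [Multiset.map_cons, Multiset.sum_cons, hsum, ha]
          ring
        · intro g hg
          rcases Multiset.mem_cons.1 hg with rfl | hg'
          · exact ha ▸ dvd_zero _
          · exact hdvd g hg'
    · -- a ≠ 0
      set ma := a.rootMultiplicity θ with hma
      obtain ⟨q, hq, hqnd⟩ := a.exists_eq_pow_rootMultiplicity_mul_and_not_dvd ha θ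
      have hqe : q.eval θ ≠ 0 := by
        intro h0
        exact hqnd (dvd_iff_isRoot.2 h0)
      rcases ih with hall | ⟨k, h, hsum, hpos, hdvd⟩
      · -- rest are all zero
        have hrest : (L.map (fun g => g ^ 2)).sum = 0 := by
          rw [Multiset.sum_eq_zero]
          intro x hx
          obtain ⟨g, hg, rfl⟩ := Multiset.mem_map.1 hx
          rw [hall g hg]; ring
        refine Or.inr ⟨ma, q ^ 2, ?_, ?_, ?_⟩
        · rw [Multiset.map_cons, Multiset.sum_cons, hrest, add_zero, hq]
          ring
        · rw [eval_pow]
          positivity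
        · intro g hg
          rcases Multiset.mem_cons.1 hg with rfl | hg'
          · exact ⟨q, hq⟩
          · rw [hall g hg']; exact dvd_zero _
      · -- general case
        refine Or.inr ⟨min ma k, (X - C θ) ^ (2 * (ma - min ma k)) * q ^ 2
            + (X - C θ) ^ (2 * (k - min ma k)) * h, ?_, ?_, ?_⟩
        · rw [Multiset.map_cons, Multiset.sum_cons, hsum, hq, mul_add]
          have h1 : 2 * min ma k + 2 * (ma - min ma k) = 2 * ma := by omega
          have h2 : 2 * min ma k + 2 * (k - min ma k) = 2 * k := by omega
          rw [← mul_assoc, ← pow_add, h1, ← mul_assoc, ← pow_add, h2]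
          ring
        · have hsq : 0 ≤ (q.eval θ) ^ 2 := sq_nonneg _
          have heval : ∀ n : ℕ, Polynomial.eval θ ((X - C θ) ^ n) = if n = 0 then 1 else 0 := by
            intro n
            cases n with
            | zero => simp
            | succ n => simp [eval_pow]
          rcases min_cases ma k with ⟨hmin, hle⟩ | ⟨hmin, hlt⟩
          · -- min = ma ≤ k
            have : ma - min ma k = 0 := by omega
            simp only [eval_add, eval_mul, heval, this, mul_zero, eval_pow]
            have hq2 : 0 < (q.eval θ) ^ 2 := by positivity
            by_cases hk : k - min ma k = 0 <;> simp [hk] <;> positivity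
          · -- min = k < ma
            have h0 : k - min ma k = 0 := by omega
            have h1 : ma - min ma k ≠ 0 := by omega
            simp only [eval_add, eval_mul, heval, h0, h1, if_neg, if_pos, eval_pow]
            simp only [zero_mul, one_mul, if_false, zero_add]
            positivity
        · intro g hg
          rcases Multiset.mem_cons.1 hg with rfl | hg'
          · exact dvd_trans (pow_dvd_pow _ (min_le_left _ _)) ⟨q, hq⟩
          · exact dvd_trans (pow_dvd_pow _ (min_le_right _ _)) (hdvd g hg')

lemma IsSOS.even_rootMultiplicity {f : Polynomial ℝ} (hf : IsSOS f) (h0 : f ≠ 0) (θ : ℝ) :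
    Even (f.rootMultiplicity θ) := by
  obtain ⟨L, rfl⟩ := hf
  rcases sos_structure θ L with hall | ⟨k, h, hsum, hpos, -⟩
  · exact absurd (Multiset.sum_eq_zero (by
      intro x hx
      obtain ⟨g, hg, rfl⟩ := Multiset.mem_map.1 hx
      rw [hall g hg]; ring)) h0
  · rw [hsum] at h0 ⊢
    rw [rootMultiplicity_mul h0, rootMultiplicity_X_sub_C_pow,
      rootMultiplicity_eq_zero (by simp [IsRoot, hpos.ne'])]
    exact ⟨k, by omega⟩

/-- If `f = g² + (sum of squares)` with `g ≠ 0`, then `f ≠ 0` and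
`rootMultiplicity θ f ≤ 2 * rootMultiplicity θ g`. -/
lemma sos_le {f g s : Polynomial ℝ} (hs : IsSOS s) (hfg : f = g ^ 2 + s) (hg : g ≠ 0) (θ : ℝ) :
    f ≠ 0 ∧ f.rootMultiplicity θ ≤ 2 * g.rootMultiplicity θ := by
  obtain ⟨L, rfl⟩ := hs
  have hf : f = ((g ::ₘ L).map (fun g => g ^ 2)).sum := by
    rw [Multiset.map_cons, Multiset.sum_cons, hfg]
  rcases sos_structure θ (g ::ₘ L) with hall | ⟨k, h, hsum, hpos, hdvd⟩
  · exact absurd (hall g (Multiset.mem_cons_self _ _)) hg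
  · rw [hf, hsum]
    have hh0 : h ≠ 0 := fun h0 => by simp [h0] at hpos
    have hne : (X - C θ) ^ (2 * k) * h ≠ 0 := mul_ne_zero (pow_ne_zero _ (X_sub_C_ne_zero θ)) hh0
    refine ⟨hne, ?_⟩
    rw [rootMultiplicity_mul hne, rootMultiplicity_X_sub_C_pow,
      rootMultiplicity_eq_zero (by simp [IsRoot, hpos.ne'])]
    have hk : k ≤ g.rootMultiplicity θ :=
      (le_rootMultiplicity_iff hg).2 (hdvd g (Multiset.mem_cons_self _ _))
    omega

lemma rm_neg (θ : ℝ) (p : Polynomial ℝ) : (-p).rootMultiplicity θ = p.rootMultiplicity θ := by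
  by_cases hp : p = 0
  · simp [hp]
  · have h1 : (-1 : Polynomial ℝ) * p ≠ 0 := by simpa using hp
    have : (-p) = (-1 : Polynomial ℝ) * p := by ring
    rw [this, rootMultiplicity_mul h1,
      rootMultiplicity_eq_zero (p := (-1 : Polynomial ℝ)) (by simp [IsRoot]), zero_add]

lemma rm_sub_lt {f g : Polynomial ℝ} {θ : ℝ} (hf : f ≠ 0) (hg : g ≠ 0)
    (h : f.rootMultiplicity θ < g.rootMultiplicity θ) :
    f - g ≠ 0 ∧ (f - g).rootMultiplicity θ = f.rootMultiplicity θ := by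
  have hne : f - g ≠ 0 := by
    intro h0
    rw [sub_eq_zero] at h0
    exact absurd (h0 ▸ rfl) h.ne
  refine ⟨hne, le_antisymm ?_ ?_⟩
  · by_contra hgt
    push_neg at hgt
    have hd1 : (X - C θ) ^ (f.rootMultiplicity θ + 1) ∣ (f - g) :=
      dvd_trans (pow_dvd_pow _ hgt) (pow_rootMultiplicity_dvd _ _)
    have hd2 : (X - C θ) ^ (f.rootMultiplicity θ + 1) ∣ g :=
      dvd_trans (pow_dvd_pow _ (by omega)) (pow_rootMultiplicity_dvd _ _)
    have hdf : (X - C θ) ^ (f.rootMultiplicity θ + 1) ∣ f := by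
      have h' := dvd_add hd1 hd2
      simpa using h'
    have := (le_rootMultiplicity_iff hf).2 hdf
    omega
  · refine (le_rootMultiplicity_iff hne).2 ?_
    exact dvd_sub (pow_rootMultiplicity_dvd _ _)
      (dvd_trans (pow_dvd_pow _ h.le) (pow_rootMultiplicity_dvd _ _))

lemma rm_sub_ne {f g : Polynomial ℝ} {θ : ℝ} (hf : f ≠ 0) (hg : g ≠ 0)
    (h : f.rootMultiplicity θ ≠ g.rootMultiplicity θ) :
    f - g ≠ 0 ∧ (f - g).rootMultiplicity θ
      = min (f.rootMultiplicity θ) (g.rootMultiplicity θ) := by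
  rcases h.lt_or_gt with hlt | hlt
  · obtain ⟨h1, h2⟩ := rm_sub_lt hf hg hlt
    exact ⟨h1, by rw [h2]; omega⟩
  · obtain ⟨h1, h2⟩ := rm_sub_lt hg hf hlt
    have hne : f - g ≠ 0 := by
      intro h0
      exact h1 (by rw [← neg_sub] at h0; simpa using congrArg Neg.neg h0)
    have : (f - g).rootMultiplicity θ = (g - f).rootMultiplicity θ := by
      rw [← rm_neg θ (g - f), neg_sub]
    rw [this, h2]
    exact ⟨hne, by omega⟩

/-- For a nonzero polynomial with root θ, the derivative is nonzero and drops
multiplicity by exactly one. -/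
lemma deriv_rm {f : Polynomial ℝ} {θ : ℝ} (hf : f ≠ 0) (h : 1 ≤ f.rootMultiplicity θ) :
    derivative f ≠ 0 ∧ (derivative f).rootMultiplicity θ + 1 = f.rootMultiplicity θ := by
  have hroot : f.IsRoot θ := (rootMultiplicity_pos hf).1 (by omega)
  have hd : derivative f ≠ 0 := by
    intro h0
    have := natDegree_eq_zero_of_derivative_eq_zero h0
    have hC := eq_C_of_natDegree_eq_zero this
    rw [hC] at hroot
    simp only [IsRoot, eval_C] at hroot
    rw [hC, hroot] at hf
    simp at hf
  have := derivative_rootMultiplicity_of_root hroot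
  exact ⟨hd, by omega⟩


lemma W_sos (G : SimpleGraph V) (A : Finset V) : ∀ u ∈ A, ∃ g, IsSOS g ∧
    m G (A.erase u) * derivative (m G A) - m G A * derivative (m G (A.erase u))
      = (m G (A.erase u)) ^ 2 + g := by
  induction A using Finset.strongInduction with
  | _ A ih =>
    intro u hu
    have hR := recurrence G hu
    have hdR : derivative (m G A) = m G (A.erase u) + X * derivative (m G (A.erase u))
        - ∑ w ∈ nbr G A u, derivative (m G ((A.erase u).erase w)) := by
      rw [hR, derivative_sub, derivative_mul, derivative_X, derivative_sum]
      ring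
    have hW : m G (A.erase u) * derivative (m G A) - m G A * derivative (m G (A.erase u))
        = (m G (A.erase u)) ^ 2 + ∑ w ∈ nbr G A u,
            (m G ((A.erase u).erase w) * derivative (m G (A.erase u))
              - m G (A.erase u) * derivative (m G ((A.erase u).erase w))) := by
      rw [hdR, hR]
      simp only [Finset.sum_sub_distrib, ← Finset.sum_mul, ← Finset.mul_sum]
      ring
    refine ⟨_, ?_, hW⟩
    refine Finset.sum_induction _ IsSOS (fun a b ha hb => ha.add hb) IsSOS.zero ?_
    intro w hw
    have hwAu : w ∈ A.erase u :=
      Finset.mem_erase.2 ⟨(mem_nbr.1 hw).1, (mem_nbr.1 hw).2.1⟩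
    obtain ⟨g, hg, heq⟩ := ih (A.erase u) (Finset.erase_ssubset hu) w hwAu
    rw [heq]
    exact (IsSOS.sq _).add hg

lemma LB (G : SimpleGraph V) {A : Finset V} {u : V} (hu : u ∈ A) (θ : ℝ) :
    (m G A).rootMultiplicity θ ≤ (m G (A.erase u)).rootMultiplicity θ + 1 := by
  by_contra hcon
  push_neg at hcon
  set n := (m G A).rootMultiplicity θ with hn
  set p := (m G (A.erase u)).rootMultiplicity θ with hp
  obtain ⟨g, hg, hW⟩ := W_sos G A u hu
  obtain ⟨hWne, hWle⟩ := sos_le hg hW (m_ne_zero _) θ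
  have hn1 : 1 ≤ n := by omega
  obtain ⟨hd, hdrm⟩ := deriv_rm (m_ne_zero A) hn1
  have hdvd1 : (X - C θ) ^ (2 * p + 1) ∣ m G (A.erase u) * derivative (m G A) := by
    have h1 : (X - C θ) ^ p ∣ m G (A.erase u) := pow_rootMultiplicity_dvd _ _
    have h2 : (X - C θ) ^ (n - 1) ∣ derivative (m G A) := by
      refine dvd_trans (pow_dvd_pow _ (by omega)) (pow_rootMultiplicity_dvd _ _)
    refine dvd_trans (pow_dvd_pow _ (show 2 * p + 1 ≤ p + (n - 1) by omega)) ?_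
    rw [pow_add]
    exact mul_dvd_mul h1 h2
  have hdvd2 : (X - C θ) ^ (2 * p + 1) ∣ m G A * derivative (m G (A.erase u)) := by
    by_cases hd0 : derivative (m G (A.erase u)) = 0
    · rw [hd0, mul_zero]; exact dvd_zero _
    · have hrm := rootMultiplicity_sub_one_le_derivative_rootMultiplicity (m G (A.erase u)) θ
      have h1 : (X - C θ) ^ n ∣ m G A := pow_rootMultiplicity_dvd _ _
      have h2 : (X - C θ) ^ (p - 1) ∣ derivative (m G (A.erase u)) :=
        dvd_trans (pow_dvd_pow _ (by omega)) (pow_rootMultiplicity_dvd _ _)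
      refine dvd_trans (pow_dvd_pow _ (show 2 * p + 1 ≤ n + (p - 1) by omega)) ?_
      rw [pow_add]
      exact mul_dvd_mul h1 h2
  have hdvdW : (X - C θ) ^ (2 * p + 1)
      ∣ m G (A.erase u) * derivative (m G A) - m G A * derivative (m G (A.erase u)) :=
    dvd_sub hdvd1 hdvd2
  have := (le_rootMultiplicity_iff hWne).2 hdvdW
  omega

lemma D_sos (G : SimpleGraph V) (A : Finset V) : ∀ u ∈ A, ∀ a ∈ A, u ≠ a →
    IsSOS (m G (A.erase u) * m G (A.erase a) - m G A * m G ((A.erase u).erase a)) := by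
  induction A using Finset.strongInduction with
  | _ A ih =>
    intro u hu a ha hne
    have hau : u ∈ A.erase a := Finset.mem_erase.2 ⟨hne, hu⟩
    have hBeq : (A.erase a).erase u = (A.erase u).erase a := Finset.erase_right_comm
    have hnbr : nbr G (A.erase a) u = (nbr G A u).erase a := by
      ext w
      simp only [mem_nbr, Finset.mem_erase]
      tauto
    have hR1 := recurrence G hu
    have hR2 := recurrence G hau
    rw [hBeq, hnbr] at hR2
    have hsummand : ∀ w ∈ (nbr G A u).erase a,
        IsSOS (m G ((A.erase u).erase w) * m G ((A.erase u).erase a)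
          - m G (A.erase u) * m G (((A.erase u).erase a).erase w)) := by
      intro w hw
      have hwa : w ≠ a := (Finset.mem_erase.1 hw).1
      have hwN : w ∈ nbr G A u := (Finset.mem_erase.1 hw).2
      have hwAu : w ∈ A.erase u :=
        Finset.mem_erase.2 ⟨(mem_nbr.1 hwN).1, (mem_nbr.1 hwN).2.1⟩
      have haAu : a ∈ A.erase u := Finset.mem_erase.2 ⟨Ne.symm hne, ha⟩
      have hIH := ih (A.erase u) (Finset.erase_ssubset hu) w hwAu a haAu hwa
      rwa [show ((A.erase u).erase w).erase a = ((A.erase u).erase a).erase w from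
        Finset.erase_right_comm] at hIH
    by_cases hadj : a ∈ nbr G A u
    · have hsplitsum : ∑ w ∈ nbr G A u, m G ((A.erase u).erase w)
          = ∑ w ∈ (nbr G A u).erase a, m G ((A.erase u).erase w)
            + m G ((A.erase u).erase a) :=
        (Finset.sum_erase_add _ _ hadj).symm
      have hD : m G (A.erase u) * m G (A.erase a) - m G A * m G ((A.erase u).erase a)
          = (m G ((A.erase u).erase a)) ^ 2 + ∑ w ∈ (nbr G A u).erase a,
              (m G ((A.erase u).erase w) * m G ((A.erase u).erase a)
                - m G (A.erase u) * m G (((A.erase u).erase a).erase w)) := by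
        rw [hR1, hR2, hsplitsum]
        simp only [Finset.sum_sub_distrib, ← Finset.sum_mul, ← Finset.mul_sum]
        ring
      rw [hD]
      exact (IsSOS.sq _).add
        (Finset.sum_induction _ IsSOS (fun a b ha hb => ha.add hb) IsSOS.zero hsummand)
    · have hNa : (nbr G A u).erase a = nbr G A u := Finset.erase_eq_of_notMem hadj
      rw [hNa] at hR2
      have hD : m G (A.erase u) * m G (A.erase a) - m G A * m G ((A.erase u).erase a)
          = ∑ w ∈ nbr G A u,
              (m G ((A.erase u).erase w) * m G ((A.erase u).erase a)
                - m G (A.erase u) * m G (((A.erase u).erase a).erase w)) := by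
        rw [hR1, hR2]
        simp only [Finset.sum_sub_distrib, ← Finset.sum_mul, ← Finset.mul_sum]
        ring
      rw [hD]
      rw [← hNa]
      exact Finset.sum_induction _ IsSOS (fun a b ha hb => ha.add hb) IsSOS.zero hsummand

theorem key (G : SimpleGraph V) (θ : ℝ) {A : Finset V} {a u : V}
    (ha : a ∈ A) (hu : u ∈ A) (hne : u ≠ a)
    (hNeu : (m G (A.erase a)).rootMultiplicity θ = (m G A).rootMultiplicity θ) :
    ((m G (A.erase u)).rootMultiplicity θ + 1 = (m G A).rootMultiplicity θ ↔
     (m G ((A.erase a).erase u)).rootMultiplicity θ + 1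
        = (m G (A.erase a)).rootMultiplicity θ) := by
  set n := (m G A).rootMultiplicity θ with hn
  set p := (m G (A.erase u)).rootMultiplicity θ with hp
  set q := (m G ((A.erase a).erase u)).rootMultiplicity θ with hqdef
  rw [hNeu]
  have hq' : (m G ((A.erase u).erase a)).rootMultiplicity θ = q := by
    rw [show (A.erase u).erase a = (A.erase a).erase u from Finset.erase_right_comm]
  have hau : u ∈ A.erase a := Finset.mem_erase.2 ⟨hne, hu⟩
  have hLBu : n ≤ p + 1 := LB G hu θ
  have hLBq : n ≤ q + 1 := by
    have := LB G hau θ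
    omega
  have hsos := D_sos G A u hu a ha hne
  set t₁ := m G (A.erase u) * m G (A.erase a) with ht₁def
  set t₂ := m G A * m G ((A.erase u).erase a) with ht₂def
  have ht₁ : t₁ ≠ 0 := mul_ne_zero (m_ne_zero _) (m_ne_zero _)
  have ht₂ : t₂ ≠ 0 := mul_ne_zero (m_ne_zero _) (m_ne_zero _)
  have hrm₁ : t₁.rootMultiplicity θ = p + n := by
    rw [ht₁def, rootMultiplicity_mul ht₁, hNeu]
  have hrm₂ : t₂.rootMultiplicity θ = n + q := by
    rw [ht₂def, rootMultiplicity_mul ht₂, hq']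
  by_cases hD : t₁ - t₂ = 0
  · have heq : t₁ = t₂ := sub_eq_zero.1 hD
    have : p + n = n + q := by rw [← hrm₁, ← hrm₂, heq]
    constructor <;> intro h <;> omega
  · have heven := hsos.even_rootMultiplicity hD θ
    constructor
    · intro hpe
      by_contra hqe
      have hlt : t₁.rootMultiplicity θ < t₂.rootMultiplicity θ := by omega
      rw [(rm_sub_lt ht₁ ht₂ hlt).2, hrm₁] at heven
      obtain ⟨r, hr⟩ := heven
      omega
    · intro hqe
      by_contra hpe
      have hlt : t₂.rootMultiplicity θ < t₁.rootMultiplicity θ := by omega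
      have hDrm : (t₁ - t₂).rootMultiplicity θ = (t₂ - t₁).rootMultiplicity θ := by
        rw [← rm_neg θ (t₂ - t₁), neg_sub]
      rw [hDrm, (rm_sub_lt ht₂ ht₁ hlt).2, hrm₂] at heven
      obtain ⟨r, hr⟩ := heven
      omega


lemma matchingPolynomial_eq_m (G : SimpleGraph V) :
    matchingPolynomial G = m G Finset.univ := by
  unfold matchingPolynomial m
  refine Finset.sum_congr ?_ ?_
  · ext M
    simp only [Finset.mem_filter, Finset.mem_univ, true_and, mem_matchSet, IsMatching]
    tauto
  · intro M hM
    congr 2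
    rw [Nat.card_eq_fintype_card]
    rfl


lemma m_map {W : Type*} [Fintype W] [DecidableEq W] (G : SimpleGraph V) (H : SimpleGraph W)
    (f : W → V) (hf : Function.Injective f)
    (hadj : ∀ x y, H.Adj x y ↔ G.Adj (f x) (f y)) (A : Finset W) :
    m H A = m G (A.image f) := by
  rcases isEmpty_or_nonempty W with hW | hW
  · have hA : A = ∅ := Finset.eq_empty_of_isEmpty A
    subst hA
    rw [Finset.image_empty, m_empty, m_empty]
  · have hinj2 : Function.Injective (Sym2.map f) := Sym2.map.injective hf
    have hleft : ∀ x : W, Function.invFun f (f x) = x :=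
      fun x => Function.leftInverse_invFun hf x
    have hmapinv : ∀ e : Sym2 W, Sym2.map (Function.invFun f) (Sym2.map f e) = e := by
      intro e
      induction e with
      | _ x y => simp [Sym2.map_pair_eq, hleft]
    have hback : ∀ e' : Sym2 V, e' ∈ G.edgeSet → (∀ x ∈ e', x ∈ Set.range f) →
        Sym2.map (Function.invFun f) e' ∈ H.edgeSet ∧
        Sym2.map f (Sym2.map (Function.invFun f) e') = e' ∧
        ∀ x ∈ Sym2.map (Function.invFun f) e', f x ∈ e' := by
      intro e'
      induction e' with
      | _ x y =>
        intro hE hR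
        have hfx : f (Function.invFun f x) = x :=
          Function.invFun_eq (hR x (Sym2.mem_mk_left x y))
        have hfy : f (Function.invFun f y) = y :=
          Function.invFun_eq (hR y (Sym2.mem_mk_right x y))
        refine ⟨?_, ?_, ?_⟩
        · rw [Sym2.map_pair_eq, SimpleGraph.mem_edgeSet, hadj _ _, hfx, hfy]
          exact hE
        · rw [Sym2.map_pair_eq, Sym2.map_pair_eq, hfx, hfy]
        · intro z hz
          rw [Sym2.map_pair_eq] at hz
          rcases Sym2.mem_iff.1 hz with rfl | rfl
          · rw [hfx]; exact Sym2.mem_mk_left x y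
          · rw [hfy]; exact Sym2.mem_mk_right x y
    rw [m, m]
    refine Finset.sum_nbij' (i := fun M => M.image (Sym2.map f))
      (j := fun M => M.image (Sym2.map (Function.invFun f))) ?_ ?_ ?_ ?_ ?_
    · -- hi
      intro M hM
      obtain ⟨h1, h2, h3⟩ := mem_matchSet.1 hM
      refine mem_matchSet.2 ⟨?_, ?_, ?_⟩
      · intro e' he'
        obtain ⟨e, he, rfl⟩ := Finset.mem_image.1 he'
        have := h1 e he
        revert this
        induction e with
        | _ x y =>
          intro hE
          rw [Sym2.map_pair_eq, SimpleGraph.mem_edgeSet]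
          exact (hadj x y).1 ((SimpleGraph.mem_edgeSet H).mp hE)
      · intro e' he' x hx
        obtain ⟨e, he, rfl⟩ := Finset.mem_image.1 he'
        obtain ⟨a, ha, rfl⟩ := Sym2.mem_map.1 hx
        exact Finset.mem_image_of_mem f (h2 e he a ha)
      · intro e' he' f' hf' hne v hv hv'
        obtain ⟨e₁, he₁, rfl⟩ := Finset.mem_image.1 he'
        obtain ⟨e₂, he₂, rfl⟩ := Finset.mem_image.1 hf'
        have h12 : e₁ ≠ e₂ := fun h => hne (by rw [h])
        obtain ⟨a, ha, hav⟩ := Sym2.mem_map.1 hv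
        obtain ⟨b, hb, hbv⟩ := Sym2.mem_map.1 hv'
        have : a = b := hf (by rw [hav, hbv])
        exact h3 e₁ he₁ e₂ he₂ h12 a ha (this ▸ hb)
    · -- hj
      intro M' hM'
      obtain ⟨h1, h2, h3⟩ := mem_matchSet.1 hM'
      have hrange : ∀ e' ∈ M', ∀ x ∈ e', x ∈ Set.range f := by
        intro e' he' x hx
        obtain ⟨a, -, rfl⟩ := Finset.mem_image.1 (h2 e' he' x hx)
        exact Set.mem_range_self a
      refine mem_matchSet.2 ⟨?_, ?_, ?_⟩
      · intro e he
        obtain ⟨e', he', rfl⟩ := Finset.mem_image.1 he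
        exact (hback e' (h1 e' he') (hrange e' he')).1
      · intro e he x hx
        obtain ⟨e', he', rfl⟩ := Finset.mem_image.1 he
        have hfx : f x ∈ e' := (hback e' (h1 e' he') (hrange e' he')).2.2 x hx
        obtain ⟨a, haA, hae⟩ := Finset.mem_image.1 (h2 e' he' (f x) hfx)
        rwa [← hf hae]
      · intro e he g hg hne v hv hv'
        obtain ⟨e₁, he₁, rfl⟩ := Finset.mem_image.1 he
        obtain ⟨e₂, he₂, rfl⟩ := Finset.mem_image.1 hg
        have h12 : e₁ ≠ e₂ := fun h => hne (by rw [h])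
        have hv₁ : f v ∈ e₁ := (hback e₁ (h1 e₁ he₁) (hrange e₁ he₁)).2.2 v hv
        have hv₂ : f v ∈ e₂ := (hback e₂ (h1 e₂ he₂) (hrange e₂ he₂)).2.2 v hv'
        exact h3 e₁ he₁ e₂ he₂ h12 (f v) hv₁ hv₂
    · -- left inverse
      intro M hM
      rw [Finset.image_image]
      calc M.image (Sym2.map (Function.invFun f) ∘ Sym2.map f)
          = M.image id := Finset.image_congr (fun e _ => hmapinv e)
        _ = M := Finset.image_id
    · -- right inverse
      intro M' hM'
      obtain ⟨h1, h2, -⟩ := mem_matchSet.1 hM'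
      have hrange : ∀ e' ∈ M', ∀ x ∈ e', x ∈ Set.range f := by
        intro e' he' x hx
        obtain ⟨a, -, rfl⟩ := Finset.mem_image.1 (h2 e' he' x hx)
        exact Set.mem_range_self a
      rw [Finset.image_image]
      calc M'.image (Sym2.map f ∘ Sym2.map (Function.invFun f))
          = M'.image id := Finset.image_congr
            (fun e' he' => (hback e' (h1 e' he') (hrange e' he')).2.1)
        _ = M' := Finset.image_id
    · -- terms
      intro M hM
      rw [Finset.card_image_of_injective M hinj2, Finset.card_image_of_injective A hf]


end MatchingAux

open MatchingAux in
-- statement 12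
theorem essential_iff_essential_delete_neutral {V : Type*} [Finite V] (θ : ℝ)
    (G : SimpleGraph V) (a : V) (ha : IsNeutral θ G a) (u : V) (hu : u ≠ a) :
    IsEssential θ G u ↔ IsEssential θ (G.induce {v | v ≠ a}) ⟨u, hu⟩ := by
  classical
  letI : Fintype V := Fintype.ofFinite V
  -- translation of single-vertex deletions
  have key1 : ∀ x : V, matchingPolynomial (G.induce {v | v ≠ x}) = m G (Finset.univ.erase x) := by
    intro x
    letI : Fintype ({v : V | v ≠ x}) := Fintype.ofFinite _
    rw [matchingPolynomial_eq_m (G.induce {v | v ≠ x}),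
      m_map G (G.induce {v | v ≠ x}) (Subtype.val) Subtype.val_injective
        (fun p q => by simp) Finset.univ]
    congr 1
    ext v
    simp only [Finset.mem_image, Finset.mem_erase, Finset.mem_univ, and_true, true_and]
    constructor
    · rintro ⟨⟨w, hw⟩, rfl⟩
      exact hw
    · intro hv
      exact ⟨⟨v, hv⟩, rfl⟩
  -- translation of the double deletion
  have key2 : matchingPolynomial ((G.induce {v | v ≠ a}).induce
        {x | x ≠ (⟨u, hu⟩ : {v : V | v ≠ a})})
      = m G ((Finset.univ.erase a).erase u) := by
    letI : Fintype ({v : V | v ≠ a}) := Fintype.ofFinite _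
    letI : Fintype ({x : {v : V | v ≠ a} | x ≠ ⟨u, hu⟩}) := Fintype.ofFinite _
    rw [matchingPolynomial_eq_m,
      m_map (G.induce {v | v ≠ a})
        ((G.induce {v | v ≠ a}).induce {x | x ≠ (⟨u, hu⟩ : {v : V | v ≠ a})})
        (Subtype.val) Subtype.val_injective (fun p q => by simp) Finset.univ,
      m_map G (G.induce {v | v ≠ a}) (Subtype.val) Subtype.val_injective
        (fun p q => by simp) _]
    congr 1
    rw [Finset.image_image]
    ext v
    simp only [Finset.mem_image, Finset.mem_erase, Finset.mem_univ, and_true, true_and,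
      Function.comp_apply]
    constructor
    · rintro ⟨⟨⟨w, hwa⟩, hwu⟩, rfl⟩
      refine ⟨?_, hwa⟩
      intro h
      exact hwu (Subtype.ext (by exact h))
    · rintro ⟨hvu, hva⟩
      exact ⟨⟨⟨v, hva⟩, fun h => hvu (congrArg Subtype.val h)⟩, rfl⟩
  have hNeu : (m G (Finset.univ.erase a)).rootMultiplicity θ
      = (m G Finset.univ).rootMultiplicity θ := by
    have := ha
    unfold IsNeutral matchMult at this
    rwa [key1 a, matchingPolynomial_eq_m G] at this
  have hkey := key G θ (Finset.mem_univ a) (Finset.mem_univ u) hu hNeu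
  unfold IsEssential matchMult
  rw [key1 u, matchingPolynomial_eq_m G, key2, key1 a]
  exact hkey
end

section
/- Let ν be a finite Borel measure on ℝ, let θ ∈ ℝ, and for t > 0 define s(θ+it) = ∫_ℝ 1/(θ + it − x) dν(x) (the Stieltjes transform of ν evaluated at θ+it). Suppose that the limit as t → 0+ of s(θ+it)/(it) exists in ℂ (is finite). Then ν({θ}) = 0 and ν has no extended states at θ: lim_{t→0+} ν([θ−t, θ+t])/t = 0. -/
open MeasureTheory Filter Complex

-- statement 19
theorem no_extended_states_of_positive (ν : Measure ℝ) [IsFiniteMeasure ν] (θ : ℝ)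
    (h : ∃ L : ℂ, Tendsto
      (fun t : ℝ => (∫ x, 1 / ((θ : ℂ) + (t : ℂ) * Complex.I - (x : ℂ)) ∂ν) / ((t : ℂ) * Complex.I))
      (nhdsWithin 0 (Set.Ioi 0)) (nhds L)) :
    ν {θ} = 0 ∧
      Tendsto (fun t : ℝ => (ν (Set.Icc (θ - t) (θ + t))).toReal / t)
        (nhdsWithin 0 (Set.Ioi 0)) (nhds 0) := by
  obtain ⟨L, hL⟩ := h
  set f : ℝ → ℝ := fun t => ∫ x, 1 / ((θ - x) ^ 2 + t ^ 2) ∂ν with hf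
  -- integrability of the real integrand
  have hint : ∀ t : ℝ, 0 < t → Integrable (fun x : ℝ => 1 / ((θ - x) ^ 2 + t ^ 2)) ν := by
    intro t ht
    have hc : Continuous fun x : ℝ => 1 / ((θ - x) ^ 2 + t ^ 2) := by
      apply continuous_const.div (by continuity)
      intro x; positivity
    refine (integrable_const (1 / t ^ 2)).mono' hc.aestronglyMeasurable ?_
    filter_upwards with x
    have habs : |1 / ((θ - x) ^ 2 + t ^ 2)| = 1 / ((θ - x) ^ 2 + t ^ 2) :=
      abs_of_nonneg (by positivity)
    rw [Real.norm_eq_abs, habs]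
    apply one_div_le_one_div_of_le (by positivity)
    nlinarith [sq_nonneg (θ - x)]
  -- integrability of the complex integrand
  have hcint : ∀ t : ℝ, 0 < t →
      Integrable (fun x : ℝ => 1 / ((θ : ℂ) + (t : ℂ) * Complex.I - (x : ℂ))) ν := by
    intro t ht
    have hne : ∀ x : ℝ, (θ : ℂ) + (t : ℂ) * Complex.I - (x : ℂ) ≠ 0 := by
      intro x hx
      have := congrArg Complex.im hx
      simp at this
      exact ht.ne' this
    have hc : Continuous fun x : ℝ => 1 / ((θ : ℂ) + (t : ℂ) * Complex.I - (x : ℂ)) := by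
      apply continuous_const.div (by continuity)
      exact hne
    refine (integrable_const (1 / t)).mono' hc.aestronglyMeasurable ?_
    filter_upwards with x
    rw [norm_div, norm_one]
    apply one_div_le_one_div_of_le ht
    have him : ((θ : ℂ) + (t : ℂ) * Complex.I - (x : ℂ)).im = t := by simp
    calc t = |((θ : ℂ) + (t : ℂ) * Complex.I - (x : ℂ)).im| := by rw [him, abs_of_pos ht]
    _ ≤ ‖(θ : ℂ) + (t : ℂ) * Complex.I - (x : ℂ)‖ := Complex.abs_im_le_norm _
  -- the real part of the quotient equals -f t
  have hre : ∀ t : ℝ, 0 < t →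
      ((∫ x, 1 / ((θ : ℂ) + (t : ℂ) * Complex.I - (x : ℂ)) ∂ν) / ((t : ℂ) * Complex.I)).re
        = - f t := by
    intro t ht
    rw [← integral_div]
    have hi : Integrable
        (fun x : ℝ => 1 / ((θ : ℂ) + (t : ℂ) * Complex.I - (x : ℂ)) / ((t : ℂ) * Complex.I)) ν :=
      (hcint t ht).div_const _
    have hre' := integral_re hi
    simp only [RCLike.re_to_complex] at hre'
    rw [← hre']
    have hpt : ∀ x : ℝ,
        (1 / ((θ : ℂ) + (t : ℂ) * Complex.I - (x : ℂ)) / ((t : ℂ) * Complex.I)).re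
          = -(1 / ((θ - x) ^ 2 + t ^ 2)) := by
      intro x
      have h1 : 1 / ((θ : ℂ) + (t : ℂ) * Complex.I - (x : ℂ)) / ((t : ℂ) * Complex.I)
          = (((θ : ℂ) + (t : ℂ) * Complex.I - (x : ℂ)) * ((t : ℂ) * Complex.I))⁻¹ := by
        rw [mul_inv, one_div, div_eq_mul_inv]
      rw [h1, Complex.inv_re]
      have h2 : (((θ : ℂ) + (t : ℂ) * Complex.I - (x : ℂ)) * ((t : ℂ) * Complex.I)).re
          = -(t ^ 2) := by
        simp [Complex.mul_re]
        ring
      have h3 : Complex.normSq (((θ : ℂ) + (t : ℂ) * Complex.I - (x : ℂ)) * ((t : ℂ) * Complex.I))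
          = ((θ - x) ^ 2 + t ^ 2) * t ^ 2 := by
        rw [map_mul]
        simp [Complex.normSq_apply]
        ring
      rw [h2, h3]
      have hd : (θ - x) ^ 2 + t ^ 2 > 0 := by positivity
      field_simp
    simp only [hpt]
    rw [integral_neg]
  -- f tends to -L.re
  have hf_tendsto : Tendsto f (nhdsWithin 0 (Set.Ioi 0)) (nhds (-L.re)) := by
    have h1 : Tendsto
        (fun t : ℝ => ((∫ x, 1 / ((θ : ℂ) + (t : ℂ) * Complex.I - (x : ℂ)) ∂ν)
          / ((t : ℂ) * Complex.I)).re)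
        (nhdsWithin 0 (Set.Ioi 0)) (nhds L.re) :=
      (Complex.continuous_re.tendsto L).comp hL
    have h2 : Tendsto (fun t : ℝ => - f t) (nhdsWithin 0 (Set.Ioi 0)) (nhds L.re) := by
      refine h1.congr' ?_
      filter_upwards [self_mem_nhdsWithin] with t ht
      exact hre t ht
    have := h2.neg
    simpa using this
  -- eventual bound on f
  set M : ℝ := -L.re + 1 with hM
  have hMev : ∀ᶠ t in nhdsWithin 0 (Set.Ioi 0), f t ≤ M := by
    have : ∀ᶠ t in nhdsWithin 0 (Set.Ioi 0), f t < M :=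
      hf_tendsto.eventually_lt_const (by simp [hM])
    filter_upwards [this] with t ht using ht.le
  -- measure bound
  have hmeas : ∀ t : ℝ, 0 < t →
      (ν (Set.Icc (θ - t) (θ + t))).toReal ≤ 2 * t ^ 2 * f t := by
    intro t ht
    have h1 : (ν (Set.Icc (θ - t) (θ + t))).toReal = ∫ x in Set.Icc (θ - t) (θ + t), (1 : ℝ) ∂ν := by
      rw [setIntegral_const]; simp; rfl
    rw [h1]
    have h2 : ∫ x in Set.Icc (θ - t) (θ + t), (1 : ℝ) ∂ν
        ≤ ∫ x in Set.Icc (θ - t) (θ + t), 2 * t ^ 2 * (1 / ((θ - x) ^ 2 + t ^ 2)) ∂ν := by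
      refine setIntegral_mono_on (integrable_const 1).integrableOn
        (((hint t ht).const_mul (2 * t ^ 2)).integrableOn) measurableSet_Icc ?_
      intro x hx
      obtain ⟨hx1, hx2⟩ := hx
      have hsq : (θ - x) ^ 2 ≤ t ^ 2 := by nlinarith
      rw [mul_one_div, le_div_iff₀ (by positivity)]
      nlinarith [sq_nonneg (θ - x)]
    refine h2.trans ?_
    have h3 : ∫ x in Set.Icc (θ - t) (θ + t), 2 * t ^ 2 * (1 / ((θ - x) ^ 2 + t ^ 2)) ∂ν
        ≤ ∫ x, 2 * t ^ 2 * (1 / ((θ - x) ^ 2 + t ^ 2)) ∂ν := by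
      refine setIntegral_le_integral ((hint t ht).const_mul (2 * t ^ 2)) ?_
      filter_upwards with x
      positivity
    refine h3.trans ?_
    rw [hf, integral_const_mul]
  -- first conclusion
  have key1 : ν {θ} = 0 := by
    have hev : ∀ᶠ t in nhdsWithin 0 (Set.Ioi 0),
        (ν {θ}).toReal ≤ 2 * t ^ 2 * M := by
      filter_upwards [hMev, self_mem_nhdsWithin] with t hft ht
      have hsub : ({θ} : Set ℝ) ⊆ Set.Icc (θ - t) (θ + t) := by
        intro x hx
        simp only [Set.mem_singleton_iff] at hx
        subst hx
        constructor <;> linarith [Set.mem_Ioi.mp ht]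
      calc (ν {θ}).toReal ≤ (ν (Set.Icc (θ - t) (θ + t))).toReal :=
            ENNReal.toReal_mono (measure_ne_top ν _) (measure_mono hsub)
        _ ≤ 2 * t ^ 2 * f t := hmeas t (Set.mem_Ioi.mp ht)
        _ ≤ 2 * t ^ 2 * M := by
            apply mul_le_mul_of_nonneg_left hft (by positivity)
    have htend : Tendsto (fun t : ℝ => 2 * t ^ 2 * M) (nhdsWithin 0 (Set.Ioi 0)) (nhds 0) := by
      have : Tendsto (fun t : ℝ => 2 * t ^ 2 * M) (nhds 0) (nhds (2 * 0 ^ 2 * M)) :=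
        ((continuous_const.mul (continuous_pow 2)).mul continuous_const).tendsto 0
      simpa using this.mono_left nhdsWithin_le_nhds
    have h0 : (ν {θ}).toReal ≤ 0 := ge_of_tendsto htend hev
    have h1 : (ν {θ}).toReal = 0 := le_antisymm h0 ENNReal.toReal_nonneg
    rw [ENNReal.toReal_eq_zero_iff] at h1
    rcases h1 with h1 | h1
    · exact h1
    · exact absurd h1 (measure_ne_top ν _)
  refine ⟨key1, ?_⟩
  -- second conclusion: squeeze
  have hub : ∀ᶠ t in nhdsWithin 0 (Set.Ioi 0),
      (ν (Set.Icc (θ - t) (θ + t))).toReal / t ≤ 2 * t * M := by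
    filter_upwards [hMev, self_mem_nhdsWithin] with t hft ht
    have ht0 : 0 < t := Set.mem_Ioi.mp ht
    rw [div_le_iff₀ ht0]
    calc (ν (Set.Icc (θ - t) (θ + t))).toReal ≤ 2 * t ^ 2 * f t := hmeas t ht0
      _ ≤ 2 * t ^ 2 * M := mul_le_mul_of_nonneg_left hft (by positivity)
      _ = 2 * t * M * t := by ring
  have hlb : ∀ᶠ t in nhdsWithin 0 (Set.Ioi 0),
      0 ≤ (ν (Set.Icc (θ - t) (θ + t))).toReal / t := by
    filter_upwards [self_mem_nhdsWithin] with t ht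
    have ht0 : 0 < t := Set.mem_Ioi.mp ht
    positivity
  have htend : Tendsto (fun t : ℝ => 2 * t * M) (nhdsWithin 0 (Set.Ioi 0)) (nhds 0) := by
    have : Tendsto (fun t : ℝ => 2 * t * M) (nhds 0) (nhds (2 * 0 * M)) :=
      ((continuous_const.mul continuous_id).mul continuous_const).tendsto 0
    simpa using this.mono_left nhdsWithin_le_nhds
  exact squeeze_zero' hlb hub htend
end
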